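/- arXiv:1711.00413 — 5 statements merged into one kernel-verified Lean document; each statement's English description precedes it below -/
import Mathlib

section
/- Let 𝒢′ = {G′_n} be a graph sequence; call a vertex of G′_n terminal if it has degree 1, and suppose that deleting all terminal vertices from each G′_n yields a graph sequence 𝒢 = {G_n} (in particular each graph G_n is connected). Then for every ε > 0 there exists a graph sequence 𝒢′_ε such that: (1) 𝒢′_ε ≃ 𝒢′; (2) e(𝒢′_ε) ≤ c(𝒢′) + ε; and (3) whenever a pair (x,y) is an edge of 𝒢′_ε but not of 𝒢′, or an edge of 𝒢′ but not of 𝒢′_ε, then both x and y are non-terminal vertices of 𝒢′ (i.e. vertices of 𝒢). -/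
open Filter Topology

/-- A graph sequence: finite connected graphs of uniformly bounded degree whose
number of vertices tends to infinity. -/
structure GraphSeq (V : ℕ → Type*) where
  G : ∀ n, SimpleGraph (V n)
  finite : ∀ n, Finite (V n)
  connected : ∀ n, (G n).Connected
  degBound : ℕ
  deg_le : ∀ n, ∀ x : V n, ((G n).neighborSet x).ncard ≤ degBound
  card_tendsto : Tendsto (fun n => Nat.card (V n)) atTop atTop

/-- The edge number `e(𝒢) = liminf |E(G_n)|/|V(G_n)|`. -/
noncomputable def GraphSeq.edgeNumber {V : ℕ → Type*} (Gs : GraphSeq V) : ℝ :=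
  liminf (fun n => (((Gs.G n).edgeSet.ncard : ℝ)) / (Nat.card (V n) : ℝ)) atTop

/-- Bi-Lipschitz equivalence `𝒢 ≃ ℋ` of graph sequences on the same vertex sets. -/
def GraphSeq.equivSeq {V : ℕ → Type*} (Gs Hs : GraphSeq V) : Prop :=
  ∃ L : ℕ, 0 < L ∧ ∀ n, ∀ x y : V n,
    (Hs.G n).dist x y ≤ L * (Gs.G n).dist x y ∧
    (Gs.G n).dist x y ≤ L * (Hs.G n).dist x y

/-- The (combinatorial) cost `c(𝒢) = inf { e(ℋ) : ℋ ≃ 𝒢 }`. -/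
noncomputable def GraphSeq.cost {V : ℕ → Type*} (Gs : GraphSeq V) : ℝ :=
  sInf { x : ℝ | ∃ Hs : GraphSeq V, Gs.equivSeq Hs ∧ x = Hs.edgeNumber }

/-- Coarse equivalence of graph sequences: a uniform `(A,A)`-quasi-isometry levelwise. -/
def coarseEquiv {V W : ℕ → Type*} (Gs : GraphSeq V) (Hs : GraphSeq W) : Prop :=
  ∃ A : ℝ, 0 < A ∧ ∀ n, ∃ f : V n → W n,
    (∀ x y : V n,
      ((Gs.G n).dist x y : ℝ) / A - A ≤ ((Hs.G n).dist (f x) (f y) : ℝ) ∧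
      ((Hs.G n).dist (f x) (f y) : ℝ) ≤ A * ((Gs.G n).dist x y : ℝ) + A) ∧
    (∀ w : W n, ∃ x : V n, ((Hs.G n).dist (f x) w : ℝ) ≤ A)

/-- Hyperfiniteness of a family of graphs. -/
def hyperfiniteFam {V : ℕ → Type*} (G : ∀ n, SimpleGraph (V n)) : Prop :=
  ∀ ε : ℝ, 0 < ε → ∃ K : ℕ, 0 < K ∧ ∃ E : ∀ n, Set (Sym2 (V n)),
    (∀ n, E n ⊆ (G n).edgeSet) ∧
    limsup (fun n => (((E n).ncard : ℝ)) / (Nat.card (V n) : ℝ)) atTop < ε ∧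
    ∀ n, ∀ x : V n, {y | ((G n).deleteEdges (E n)).Reachable x y}.ncard ≤ K

def GraphSeq.hyperfinite {V : ℕ → Type*} (Gs : GraphSeq V) : Prop :=
  hyperfiniteFam Gs.G

/-- Property A for a family of graphs. -/
def propertyAFam {V : ℕ → Type*} (G : ∀ n, SimpleGraph (V n)) : Prop :=
  ∀ ε : ℝ, 0 < ε → ∃ S : ℕ, 0 < S ∧ ∀ n, ∃ ξ : V n → V n → ℝ,
    (∀ x, ∑ᶠ y, |ξ x y| = 1) ∧
    (∀ x y, ξ x y ≠ 0 → (G n).dist x y ≤ S) ∧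
    (∀ x y, (G n).Adj x y → ∑ᶠ z, |ξ x z - ξ y z| < ε)

def GraphSeq.propertyA {V : ℕ → Type*} (Gs : GraphSeq V) : Prop :=
  propertyAFam Gs.G

/-- Property almost-A: one may delete a vanishing proportion of vertices to get property A. -/
def GraphSeq.almostA {V : ℕ → Type*} (Gs : GraphSeq V) : Prop :=
  ∃ V' : ∀ n, Set (V n),
    Tendsto (fun n => (((V' n).ncard : ℝ)) / (Nat.card (V n) : ℝ)) atTop (𝓝 0) ∧
    propertyAFam (fun n => (Gs.G n).induce ((V' n)ᶜ))

/-- The set of edges of `G` with exactly one endpoint in `F`. -/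
def edgeBoundary {V : Type*} (G : SimpleGraph V) (F : Set V) : Set (Sym2 V) :=
  {e | e ∈ G.edgeSet ∧ ∃ x y, e = s(x, y) ∧ x ∈ F ∧ y ∉ F}

/-- The Cayley graph of a group with respect to a set `S`. -/
def cayleyGraph (Γ : Type*) [Group Γ] (S : Set Γ) : SimpleGraph Γ :=
  SimpleGraph.fromRel (fun x y => ∃ s ∈ S, y = x * s)

/-- The simple graph underlying an `S`-labelled graph given by label maps `lab`. -/
def labGraph {Γ V : Type*} (S : Set Γ) (lab : Γ → V → V) : SimpleGraph V :=
  SimpleGraph.fromRel (fun x y => ∃ s ∈ S, y = lab s x)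

/-- Right multiplication by `s` on the right cosets of `H`. -/
def schreierMul {Γ : Type*} [Group Γ] (H : Subgroup Γ) (s : Γ) :
    Quotient (QuotientGroup.rightRel H) → Quotient (QuotientGroup.rightRel H) :=
  Quotient.map (fun g => g * s) (fun a b hab => by
    have h := (QuotientGroup.rightRel_apply).mp hab
    exact (QuotientGroup.rightRel_apply).mpr (by
      simpa [mul_assoc] using h))

/-- The Schreier graph `Sch(Γ, H, S)` on the right cosets of `H`. -/
def schreierGraph {Γ : Type*} [Group Γ] (H : Subgroup Γ) (S : Set Γ) :
    SimpleGraph (Quotient (QuotientGroup.rightRel H)) :=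
  labGraph S (fun s => schreierMul H s)

/-- The rooted labelled `r`-ball of the labelled graph `lab` at `x` is isomorphic to
the `r`-ball around the identity in `Cay(Γ, S)`. -/
def ballIso {Γ : Type*} [Group Γ] (S : Set Γ) {V : Type*} (lab : Γ → V → V)
    (x : V) (r : ℕ) : Prop :=
  ∃ f : Γ → V, f 1 = x ∧
    (∀ g g' : Γ, (cayleyGraph Γ S).dist 1 g ≤ r → (cayleyGraph Γ S).dist 1 g' ≤ r →
      f g = f g' → g = g') ∧
    (∀ g : Γ, (cayleyGraph Γ S).dist 1 g < r → ∀ s ∈ S, f (g * s) = lab s (f g)) ∧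
    (∀ v : V, (labGraph S lab).dist x v ≤ r →
      ∃ g : Γ, (cayleyGraph Γ S).dist 1 g ≤ r ∧ f g = v)

/-- Benjamini–Schramm convergence of the `S`-labelled graphs given by `lab` to `Cay(Γ, S)`. -/
def BSConv {Γ : Type*} [Group Γ] (S : Set Γ) {V : ℕ → Type*}
    (lab : ∀ n, Γ → V n → V n) : Prop :=
  ∀ r : ℕ, Tendsto
    (fun n => ((Nat.card {x : V n // ballIso S (lab n) x r} : ℝ)) / (Nat.card (V n) : ℝ))
    atTop (𝓝 1)

/-- A sofic approximation of `Γ`: a graph sequence labelled by `S` which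
Benjamini–Schramm converges to `Cay(Γ, S)`. -/
def IsSoficApprox {Γ : Type*} [Group Γ] (S : Set Γ) {V : ℕ → Type*} (Gs : GraphSeq V)
    (lab : ∀ n, Γ → V n → V n) : Prop :=
  (∀ n, Gs.G n = labGraph S (lab n)) ∧ BSConv S lab

/-- Amenability via Følner sets with respect to the generating set `S`. -/
def FolnerAmenable {Γ : Type*} [Group Γ] (S : Set Γ) : Prop :=
  ∀ ε : ℝ, 0 < ε → ∃ F : Set Γ, F.Finite ∧ F.Nonempty ∧
    ∀ g ∈ S, ((symmDiff ((fun x => g * x) '' F) F).ncard : ℝ) < ε * (F.ncard : ℝ)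

/-!
Choose `ℋ ≃ 𝒢'`, say `L`-bi-Lipschitz, with `e(ℋ) < c(𝒢') + ε`, and let `S` be the set of
non-terminal vertices. Walking in `H_n` along geodesics towards `S` gives a retraction
`ρ : V → S`; a terminal vertex is `G'_n`-adjacent to `S`, so `ρ` moves points by at most `L`.
Keep the pendant edges of `G'_n` and replace its edges inside `S` by the image of `H_n` under
`ρ`. The result is `L(2L+1)`-bi-Lipschitz to `G'_n`, and it has at most `|E(H_n)|` edges: the
`|T|` edges from each terminal vertex `a` to its first step towards `S` are pairwise distinct
(the distance to `S` drops along them) and are collapsed by `ρ`, which pays for the `|T|`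
pendant edges.
-/

theorem Set.ncard_biUnion_le_ncard_mul {ι α : Type*} {t : Set ι} (ht : t.Finite)
    (s : ι → Set α) {k : ℕ} (hk : ∀ i ∈ t, (s i).ncard ≤ k) :
    (⋃ i ∈ t, s i).ncard ≤ t.ncard * k := by
  calc (⋃ i ∈ t, s i).ncard ≤ ∑ i ∈ ht.toFinset, (s i).ncard := by
        simpa using ht.toFinset.set_ncard_biUnion_le s
    _ ≤ ht.toFinset.card • k := Finset.sum_le_card_nsmul _ _ _ (by simpa using hk)
    _ = t.ncard * k := by rw [Set.ncard_eq_toFinset_card t ht, smul_eq_mul]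

namespace SimpleGraph

variable {V W : Type*}

theorem ncard_edgeSet_le_ncard_mul [Finite V] (G : SimpleGraph V) {s : Set V}
    (hs : ∀ e ∈ G.edgeSet, ∃ x ∈ s, x ∈ e) {d : ℕ}
    (hd : ∀ x ∈ s, (G.neighborSet x).ncard ≤ d) :
    G.edgeSet.ncard ≤ s.ncard * d := by
  have hcover : G.edgeSet ⊆ ⋃ x ∈ s, (fun y => s(x, y)) '' G.neighborSet x := by
    intro e he
    obtain ⟨x, hx, hxe⟩ := hs e he
    obtain ⟨y, rfl⟩ := Sym2.mem_iff_exists.mp hxe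
    exact Set.mem_biUnion hx ⟨y, he, rfl⟩
  calc G.edgeSet.ncard ≤ _ := Set.ncard_le_ncard hcover
    _ ≤ s.ncard * d := Set.ncard_biUnion_le_ncard_mul s.toFinite _ fun x hx =>
        (Set.ncard_image_le (Set.toFinite _)).trans (hd x hx)

theorem ncard_edgeSet_map_add_ncard_le [Finite V] (H : SimpleGraph V) (f : V → W)
    {F : Set (Sym2 V)} (hF : F ⊆ H.edgeSet) (hcollapse : ∀ e ∈ F, (e.map f).IsDiag) :
    (H.map f).edgeSet.ncard + F.ncard ≤ H.edgeSet.ncard := by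
  have hsub : (H.map f).edgeSet ⊆ Sym2.map f '' (H.edgeSet \ F) := by
    intro e
    induction e using Sym2.ind with
    | _ u v =>
      rintro ⟨huv, a, b, hab, rfl, rfl⟩
      refine ⟨s(a, b), ⟨hab, fun hF' => huv ?_⟩, rfl⟩
      simpa using hcollapse _ hF'
  calc (H.map f).edgeSet.ncard + F.ncard
      ≤ (H.edgeSet \ F).ncard + F.ncard := by
        gcongr
        exact (Set.ncard_le_ncard hsub (Set.toFinite _)).trans
          (Set.ncard_image_le (Set.toFinite _))
    _ = H.edgeSet.ncard := Set.ncard_sdiff_add_ncard_of_subset hF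

section Lipschitz

variable {A : SimpleGraph V} {B : SimpleGraph W} {f : V → W} {C : ℕ}

theorem edist_le_mul_length_of_adj (h : ∀ a b, A.Adj a b → B.edist (f a) (f b) ≤ C)
    {x y : V} (w : A.Walk x y) : B.edist (f x) (f y) ≤ C * w.length := by
  induction w with
  | nil => simp
  | @cons a b c hab w ih =>
    calc B.edist (f a) (f c) ≤ B.edist (f a) (f b) + B.edist (f b) (f c) := B.edist_triangle
      _ ≤ C + C * w.length := add_le_add (h a b hab) ih
      _ = C * (Walk.cons hab w).length := by
          rw [Walk.length_cons]; push_cast; ring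

theorem Reachable.edist_le_mul_edist_of_adj {x y : V} (hxy : A.Reachable x y)
    (h : ∀ a b, A.Adj a b → B.edist (f a) (f b) ≤ C) :
    B.edist (f x) (f y) ≤ C * A.edist x y := by
  obtain ⟨w, hw⟩ := hxy.exists_walk_length_eq_edist
  rw [← hw]
  exact edist_le_mul_length_of_adj h w

theorem Reachable.dist_le_mul_dist_of_adj (hB : B.Connected) {x y : V} (hxy : A.Reachable x y)
    (h : ∀ a b, A.Adj a b → B.dist (f a) (f b) ≤ C) :
    B.dist (f x) (f y) ≤ C * A.dist x y := by
  have key := hxy.edist_le_mul_edist_of_adj (B := B) (f := f) (C := C) fun a b hab => by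
    rw [← (hB _ _).coe_dist_eq_edist]
    exact_mod_cast h a b hab
  rw [← (hB _ _).coe_dist_eq_edist, ← hxy.coe_dist_eq_edist] at key
  exact_mod_cast key

end Lipschitz

-- `ball` is open: `G.ball c (r + 1)` is the closed ball of radius `r`.
theorem ncard_ball_le [Finite V] {G : SimpleGraph V} {d : ℕ}
    (hd : ∀ x, (G.neighborSet x).ncard ≤ d) (c : V) (r : ℕ) :
    (G.ball c (r + 1)).ncard ≤ (d + 1) ^ r := by
  induction r with
  | zero => simp
  | succ r ih =>
    have hsub :
        G.ball c (↑(r + 1) + 1) ⊆ ⋃ y ∈ G.ball c (r + 1), insert y (G.neighborSet y) := by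
      intro v hv
      have hle : G.edist v c ≤ ↑(r + 1) := (ENat.lt_add_one_iff (by simp)).mp hv
      obtain ⟨w, hw⟩ := (reachable_of_edist_ne_top
        (hle.trans_lt (ENat.natCast_lt_top _)).ne).exists_walk_length_eq_edist
      cases w with
      | nil => exact Set.mem_biUnion (mem_ball_self (by simp)) (Set.mem_insert _ _)
      | @cons _ u _ hvu w' =>
        have hlen : w'.length ≤ r := by
          rw [← hw, Walk.length_cons] at hle
          exact Nat.le_of_succ_le_succ (by exact_mod_cast hle)
        refine Set.mem_biUnion (x := u) ?_ (Set.mem_insert_of_mem _ hvu.symm)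
        exact (edist_le w').trans_lt (by exact_mod_cast Nat.lt_succ_of_le hlen)
    calc (G.ball c (↑(r + 1) + 1)).ncard ≤ _ := Set.ncard_le_ncard hsub
      _ ≤ (G.ball c (r + 1)).ncard * (d + 1) :=
        Set.ncard_biUnion_le_ncard_mul (Set.toFinite _) _ fun y _ =>
          (Set.ncard_insert_le _ _).trans (Nat.succ_le_succ (hd y))
      _ ≤ (d + 1) ^ (r + 1) := by rw [pow_succ]; gcongr

theorem Reachable.mem_of_forall_adj_mem {G : SimpleGraph V} {s : Set V}
    (hs : ∀ a ∈ s, ∀ b, G.Adj a b → b ∈ s) {x y : V} (hxy : G.Reachable x y)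
    (hx : x ∈ s) : y ∈ s := by
  obtain ⟨w⟩ := hxy
  induction w with
  | nil => exact hx
  | cons hab _ ih => exact ih (hs _ hx _ hab)

theorem Connected.eq_or_eq_of_adj_of_ncard_neighborSet_eq_one {G : SimpleGraph V}
    (hG : G.Connected) {x y : V} (hxy : G.Adj x y) (hx : (G.neighborSet x).ncard = 1)
    (hy : (G.neighborSet y).ncard = 1) (z : V) : z = x ∨ z = y := by
  have nbr : ∀ {u v}, G.Adj u v → (G.neighborSet u).ncard = 1 → G.neighborSet u = {v} := by
    intro u v huv hu
    obtain ⟨w, hw⟩ := Set.ncard_eq_one.mp hu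
    rw [hw, Set.singleton_eq_singleton_iff.mpr ((Set.ext_iff.mp hw v).mp huv)]
  have hclosed : ∀ a ∈ ({x, y} : Set V), ∀ b, G.Adj a b → b ∈ ({x, y} : Set V) := by
    rintro a (rfl | rfl) b hab
    · exact Or.inr ((nbr hxy hx).subset hab)
    · exact Or.inl ((nbr hxy.symm hy).subset hab)
  exact (hG x z).mem_of_forall_adj_mem hclosed (Set.mem_insert x _)

theorem Connected.exists_adj_ncard_neighborSet_ne_one {G : SimpleGraph V} (hG : G.Connected)
    (hne : ∃ z, (G.neighborSet z).ncard ≠ 1) {x : V} (hx : (G.neighborSet x).ncard = 1) :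
    ∃ y, G.Adj x y ∧ (G.neighborSet y).ncard ≠ 1 := by
  obtain ⟨y, hy⟩ := Set.ncard_eq_one.mp hx
  have hxy : G.Adj x y := by simp [← mem_neighborSet, hy]
  refine ⟨y, hxy, fun hy1 => ?_⟩
  obtain ⟨z, hz⟩ := hne
  rcases hG.eq_or_eq_of_adj_of_ncard_neighborSet_eq_one hxy hx hy1 z with rfl | rfl <;>
    contradiction

section Retraction

-- Junk value `0` when `S` is empty.
noncomputable def infDist (H : SimpleGraph V) (a : V) (S : Set V) : ℕ := sInf (H.dist a '' S)

variable (H : SimpleGraph V) (S : Set V)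

open Classical in
noncomputable def stepTowards (a : V) : V :=
  if h : ∃ b, H.Adj a b ∧ H.infDist b S < H.infDist a S then h.choose else a

noncomputable def retractTo (a : V) : V := (H.stepTowards S)^[H.infDist a S] a

variable {H S}

theorem infDist_le {a s : V} (hs : s ∈ S) : H.infDist a S ≤ H.dist a s :=
  Nat.sInf_le ⟨s, hs, rfl⟩

theorem infDist_of_mem {a : V} (ha : a ∈ S) : H.infDist a S = 0 :=
  Nat.eq_zero_of_le_zero ((infDist_le ha).trans_eq H.dist_self)

theorem exists_dist_eq_infDist (hS : S.Nonempty) (a : V) :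
    ∃ s ∈ S, H.dist a s = H.infDist a S :=
  Nat.sInf_mem (hS.image _)

theorem infDist_eq_zero_iff (hH : H.Connected) (hS : S.Nonempty) {a : V} :
    H.infDist a S = 0 ↔ a ∈ S := by
  refine ⟨fun h => ?_, infDist_of_mem⟩
  obtain ⟨s, hs, hdist⟩ := exists_dist_eq_infDist hS a
  rwa [(hH.dist_eq_zero_iff.mp (hdist.trans h))]

theorem Adj.infDist_le_infDist_add_one (hH : H.Connected) (hS : S.Nonempty) {a b : V}
    (hab : H.Adj a b) :
    H.infDist a S ≤ H.infDist b S + 1 := by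
  obtain ⟨s, hs, hdist⟩ := exists_dist_eq_infDist hS b
  calc H.infDist a S ≤ H.dist a s := infDist_le hs
    _ ≤ H.dist a b + H.dist b s := hH.dist_triangle
    _ = H.infDist b S + 1 := by rw [dist_eq_one_iff_adj.mpr hab, hdist, add_comm]

theorem exists_adj_infDist_lt (hH : H.Connected) (hS : S.Nonempty) {a : V} (ha : a ∉ S) :
    ∃ b, H.Adj a b ∧ H.infDist b S < H.infDist a S := by
  obtain ⟨s, hs, hdist⟩ := exists_dist_eq_infDist hS a
  obtain ⟨w, hw⟩ := (hH a s).exists_walk_length_eq_dist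
  cases w with
  | nil => exact absurd hs ha
  | @cons _ b _ hab w' =>
    refine ⟨b, hab, ?_⟩
    calc H.infDist b S ≤ w'.length := (infDist_le hs).trans (dist_le w')
      _ < H.infDist a S := by rw [← hdist, ← hw, Walk.length_cons]; omega

theorem stepTowards_of_mem {a : V} (ha : a ∈ S) : H.stepTowards S a = a := by
  have hno : ¬∃ b, H.Adj a b ∧ H.infDist b S < H.infDist a S := by simp [infDist_of_mem ha]
  rw [stepTowards, dif_neg hno]

theorem stepTowards_spec (hH : H.Connected) (hS : S.Nonempty) {a : V} (ha : a ∉ S) :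
    H.Adj a (H.stepTowards S a) ∧ H.infDist (H.stepTowards S a) S < H.infDist a S := by
  have h := exists_adj_infDist_lt hH hS ha
  rw [stepTowards, dif_pos h]
  exact h.choose_spec

theorem infDist_stepTowards (hH : H.Connected) (hS : S.Nonempty) (a : V) :
    H.infDist (H.stepTowards S a) S = H.infDist a S - 1 := by
  by_cases ha : a ∈ S
  · rw [stepTowards_of_mem ha, infDist_of_mem ha]
  · obtain ⟨hadj, hlt⟩ := stepTowards_spec hH hS ha
    have := hadj.infDist_le_infDist_add_one hH hS
    omega

theorem dist_stepTowards_le_one (hH : H.Connected) (hS : S.Nonempty) (a : V) :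
    H.dist a (H.stepTowards S a) ≤ 1 := by
  by_cases ha : a ∈ S
  · simp [stepTowards_of_mem ha]
  · exact (dist_eq_one_iff_adj.mpr (stepTowards_spec hH hS ha).1).le

theorem infDist_iterate_stepTowards (hH : H.Connected) (hS : S.Nonempty) (k : ℕ) (a : V) :
    H.infDist ((H.stepTowards S)^[k] a) S = H.infDist a S - k := by
  induction k with
  | zero => rfl
  | succ k ih => rw [Function.iterate_succ_apply', infDist_stepTowards hH hS, ih]; omega

theorem dist_iterate_stepTowards_le (hH : H.Connected) (hS : S.Nonempty) (k : ℕ) (a : V) :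
    H.dist a ((H.stepTowards S)^[k] a) ≤ k := by
  induction k with
  | zero => simp
  | succ k ih =>
    rw [Function.iterate_succ_apply']
    exact hH.dist_triangle.trans (add_le_add ih (dist_stepTowards_le_one hH hS _))

theorem retractTo_mem (hH : H.Connected) (hS : S.Nonempty) (a : V) : H.retractTo S a ∈ S := by
  rw [← infDist_eq_zero_iff hH hS, retractTo, infDist_iterate_stepTowards hH hS, Nat.sub_self]

theorem dist_retractTo_le (hH : H.Connected) (hS : S.Nonempty) (a : V) :
    H.dist a (H.retractTo S a) ≤ H.infDist a S :=
  dist_iterate_stepTowards_le hH hS _ a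

theorem retractTo_stepTowards (hH : H.Connected) (hS : S.Nonempty) {a : V} (ha : a ∉ S) :
    H.retractTo S (H.stepTowards S a) = H.retractTo S a := by
  have hpos : 0 < H.infDist a S := Nat.pos_of_ne_zero ((infDist_eq_zero_iff hH hS).not.mpr ha)
  obtain ⟨k, hk⟩ := Nat.exists_eq_add_of_lt hpos
  rw [retractTo, retractTo, infDist_stepTowards hH hS, hk, zero_add,
    Nat.add_sub_cancel, Function.iterate_succ_apply]

theorem retractTo_of_mem {a : V} (ha : a ∈ S) : H.retractTo S a = a := by
  rw [retractTo, infDist_of_mem ha, Function.iterate_zero_apply]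

theorem ncard_edgeSet_map_retractTo_add_le [Finite V] (hH : H.Connected) (hS : S.Nonempty) :
    (H.map (H.retractTo S)).edgeSet.ncard + Sᶜ.ncard ≤ H.edgeSet.ncard := by
  set F := (fun a => s(a, H.stepTowards S a)) '' Sᶜ
  have hinj : Set.InjOn (fun a => s(a, H.stepTowards S a)) Sᶜ := by
    intro a ha b hb hab
    rcases Sym2.eq_iff.mp hab with ⟨h, -⟩ | ⟨h1, h2⟩
    · exact h
    · have d1 := infDist_stepTowards hH hS a
      have d2 := infDist_stepTowards hH hS b
      have := (infDist_eq_zero_iff hH hS).not.mpr ha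
      rw [h2] at d1
      rw [← h1] at d2
      omega
  have hF : F ⊆ H.edgeSet := by
    rintro _ ⟨a, ha, rfl⟩
    exact (stepTowards_spec hH hS ha).1
  have hcollapse : ∀ e ∈ F, (e.map (H.retractTo S)).IsDiag := by
    rintro _ ⟨a, ha, rfl⟩
    simp [retractTo_stepTowards hH hS ha]
  simpa [F, hinj.ncard_image] using
    ncard_edgeSet_map_add_ncard_le H (H.retractTo S) hF hcollapse

end Retraction

noncomputable def rewire (G H : SimpleGraph V) (S : Set V) : SimpleGraph V :=
  G.deleteEdges S.sym2 ⊔ H.map (H.retractTo S)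

section Rewire

variable {G H : SimpleGraph V} {S : Set V} {L : ℕ}

theorem mem_of_xor_rewire_adj (hH : H.Connected) (hS : S.Nonempty) {x y : V}
    (h : Xor ((G.rewire H S).Adj x y) (G.Adj x y)) :
    x ∈ S ∧ y ∈ S := by
  rcases h with ⟨hK | ⟨-, a, b, -, rfl, rfl⟩, hG⟩ | ⟨hG, hK⟩
  · exact absurd hK.1 hG
  · exact ⟨retractTo_mem hH hS a, retractTo_mem hH hS b⟩
  · by_contra hxy
    exact hK (Or.inl (deleteEdges_adj.mpr ⟨hG, hxy⟩))

theorem ncard_edgeSet_rewire_le [Finite V] (hleaf : ∀ x ∉ S, (G.neighborSet x).ncard ≤ 1)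
    (hH : H.Connected) (hS : S.Nonempty) :
    (G.rewire H S).edgeSet.ncard ≤ H.edgeSet.ncard := by
  have hpendant : (G.deleteEdges S.sym2).edgeSet.ncard ≤ Sᶜ.ncard * 1 := by
    refine ncard_edgeSet_le_ncard_mul _ (fun e he => ?_) fun x hx =>
      (Set.ncard_le_ncard fun y hy => hy.1).trans (hleaf x hx)
    induction e using Sym2.ind with
    | _ x y =>
      have hxy : ¬(x ∈ S ∧ y ∈ S) := (deleteEdges_adj.mp he).2
      by_cases hx : x ∈ S
      · exact ⟨y, fun hy => hxy ⟨hx, hy⟩, Sym2.mem_mk_right x y⟩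
      · exact ⟨x, hx, Sym2.mem_mk_left x y⟩
  calc (G.rewire H S).edgeSet.ncard
      ≤ (G.deleteEdges S.sym2).edgeSet.ncard + (H.map (H.retractTo S)).edgeSet.ncard := by
        rw [rewire, edgeSet_sup]
        exact Set.ncard_union_le _ _
    _ ≤ H.edgeSet.ncard := by
        have := ncard_edgeSet_map_retractTo_add_le hH hS
        omega

theorem infDist_le_of_dist_le_mul (hSG : ∀ a ∉ S, ∃ b ∈ S, G.Adj a b)
    (hLip : ∀ x y, H.dist x y ≤ L * G.dist x y) (a : V) : H.infDist a S ≤ L := by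
  by_cases ha : a ∈ S
  · simp [infDist_of_mem ha]
  · obtain ⟨b, hb, hab⟩ := hSG a ha
    calc H.infDist a S ≤ H.dist a b := infDist_le hb
      _ ≤ L * G.dist a b := hLip a b
      _ = L := by rw [dist_eq_one_iff_adj.mpr hab, mul_one]

theorem edist_rewire_retractTo_le_one {a b : V} (hab : H.Adj a b) :
    (G.rewire H S).edist (H.retractTo S a) (H.retractTo S b) ≤ 1 := by
  rw [edist_le_one_iff_adj_or_eq]
  by_cases he : H.retractTo S a = H.retractTo S b
  · exact Or.inr he
  · exact Or.inl (Or.inr (map_adj_apply' hab he))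

theorem edist_rewire_le (hG : G.Connected) (hH : H.Connected)
    (hLip : ∀ x y, H.dist x y ≤ L * G.dist x y ∧ G.dist x y ≤ L * H.dist x y) (x y : V) :
    (G.rewire H S).edist x y ≤ L * G.edist x y := by
  refine (hG x y).edist_le_mul_edist_of_adj (f := id) fun a b hab => ?_
  have hdist : G.dist a b = 1 := dist_eq_one_iff_adj.mpr hab
  by_cases hin : a ∈ S ∧ b ∈ S
  -- `retractTo` fixes `S` and sends `H`-edges to rewired edges or loops.
  · have key := (hH a b).edist_le_mul_edist_of_adj (C := 1)
      fun _ _ h => edist_rewire_retractTo_le_one (G := G) (S := S) h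
    rw [retractTo_of_mem hin.1, retractTo_of_mem hin.2, Nat.cast_one, one_mul,
      ← (hH a b).coe_dist_eq_edist] at key
    exact key.trans (by exact_mod_cast (hLip a b).1.trans_eq (by rw [hdist, mul_one]))
  · have hadj : (G.rewire H S).Adj a b := Or.inl (deleteEdges_adj.mpr ⟨hab, hin⟩)
    have hL : 1 ≤ L := by
      have := (hLip a b).2
      rw [hdist] at this
      exact Nat.pos_of_ne_zero (by rintro rfl; simp at this)
    rw [id, id, edist_eq_one_iff_adj.mpr hadj]
    exact_mod_cast hL

theorem rewire_connected (hG : G.Connected) (hH : H.Connected)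
    (hLip : ∀ x y, H.dist x y ≤ L * G.dist x y ∧ G.dist x y ≤ L * H.dist x y) :
    (G.rewire H S).Connected := by
  refine (connected_iff _).mpr ⟨fun x y => ?_, hG.nonempty⟩
  refine reachable_of_edist_ne_top (ne_top_of_le_ne_top ?_ (edist_rewire_le hG hH hLip x y))
  rw [← (hG _ _).coe_dist_eq_edist]
  exact_mod_cast ENat.natCast_ne_top (L * G.dist x y)

theorem dist_rewire_le (hG : G.Connected) (hH : H.Connected)
    (hLip : ∀ x y, H.dist x y ≤ L * G.dist x y ∧ G.dist x y ≤ L * H.dist x y) (x y : V) :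
    (G.rewire H S).dist x y ≤ L * G.dist x y := by
  have key := edist_rewire_le (S := S) hG hH hLip x y
  rw [← (hG x y).coe_dist_eq_edist,
    ← ((rewire_connected hG hH hLip).preconnected x y).coe_dist_eq_edist] at key
  exact_mod_cast key

theorem dist_le_of_rewire_adj (hH : H.Connected) (hS : S.Nonempty)
    (hSG : ∀ a ∉ S, ∃ b ∈ S, G.Adj a b)
    (hLip : ∀ x y, H.dist x y ≤ L * G.dist x y ∧ G.dist x y ≤ L * H.dist x y) {x y : V}
    (hxy : (G.rewire H S).Adj x y) : G.dist x y ≤ L * (2 * L + 1) := by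
  have hρ : ∀ a, H.dist a (H.retractTo S a) ≤ L := fun a =>
    (dist_retractTo_le hH hS a).trans (infDist_le_of_dist_le_mul hSG (fun x y => (hLip x y).1) a)
  rcases hxy with hxy | ⟨-, a, b, hab, rfl, rfl⟩
  · calc G.dist x y ≤ L * H.dist x y := (hLip x y).2
      _ ≤ L * (L * G.dist x y) := by gcongr; exact (hLip x y).1
      _ ≤ L * (2 * L + 1) := by
        rw [dist_eq_one_iff_adj.mpr (deleteEdges_adj.mp hxy).1]
        gcongr
        omega
  · calc G.dist (H.retractTo S a) (H.retractTo S b)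
        ≤ L * H.dist (H.retractTo S a) (H.retractTo S b) := (hLip _ _).2
      _ ≤ L * (2 * L + 1) := by
        gcongr
        calc H.dist (H.retractTo S a) (H.retractTo S b)
            ≤ H.dist (H.retractTo S a) a + H.dist a b + H.dist b (H.retractTo S b) :=
              hH.dist_triangle.trans (add_le_add_left hH.dist_triangle _)
          _ ≤ L + 1 + L := by
              gcongr
              · rw [dist_comm]; exact hρ a
              · exact (dist_eq_one_iff_adj.mpr hab).le
              · exact hρ b
          _ = 2 * L + 1 := by ring

theorem dist_le_rewire (hG : G.Connected) (hH : H.Connected) (hS : S.Nonempty)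
    (hSG : ∀ a ∉ S, ∃ b ∈ S, G.Adj a b)
    (hLip : ∀ x y, H.dist x y ≤ L * G.dist x y ∧ G.dist x y ≤ L * H.dist x y) (x y : V) :
    G.dist x y ≤ L * (2 * L + 1) * (G.rewire H S).dist x y :=
  ((rewire_connected hG hH hLip).preconnected x y).dist_le_mul_dist_of_adj (f := id) hG
    fun _ _ hab => dist_le_of_rewire_adj hH hS hSG hLip hab

theorem ncard_neighborSet_rewire_le [Finite V] {d : ℕ} (hd : ∀ x, (G.neighborSet x).ncard ≤ d)
    (hG : G.Connected) (hH : H.Connected) (hS : S.Nonempty)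
    (hSG : ∀ a ∉ S, ∃ b ∈ S, G.Adj a b)
    (hLip : ∀ x y, H.dist x y ≤ L * G.dist x y ∧ G.dist x y ≤ L * H.dist x y) (x : V) :
    ((G.rewire H S).neighborSet x).ncard ≤ (d + 1) ^ (L * (2 * L + 1)) := by
  refine (Set.ncard_le_ncard fun y hxy => ?_).trans (ncard_ball_le hd x _)
  rw [mem_ball, ← (hG y x).coe_dist_eq_edist, dist_comm]
  exact (ENat.lt_add_one_iff (ENat.natCast_ne_top _)).mpr
    (by exact_mod_cast dist_le_of_rewire_adj hH hS hSG hLip hxy)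

end Rewire

end SimpleGraph

namespace GraphSeq

variable {V : ℕ → Type*}

theorem equivSeq_refl (Gs : GraphSeq V) : Gs.equivSeq Gs :=
  ⟨1, one_pos, fun _ _ _ => by simp⟩

theorem exists_equivSeq_edgeNumber_lt (Gs : GraphSeq V) {c : ℝ} (hc : Gs.cost < c) :
    ∃ Hs : GraphSeq V, Gs.equivSeq Hs ∧ Hs.edgeNumber < c := by
  set E := {x : ℝ | ∃ Hs : GraphSeq V, Gs.equivSeq Hs ∧ x = Hs.edgeNumber}
  obtain ⟨_, ⟨Hs, hHs, rfl⟩, hlt⟩ : ∃ x ∈ E, x < c := by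
    by_cases hE : BddBelow E
    · exact exists_lt_of_csInf_lt ⟨_, Gs, Gs.equivSeq_refl, rfl⟩ hc
    · exact not_bddBelow_iff.mp hE c
  exact ⟨Hs, hHs, hlt⟩

theorem edgeNumber_le_edgeNumber {Gs Hs : GraphSeq V}
    (h : ∀ n, (Gs.G n).edgeSet.ncard ≤ (Hs.G n).edgeSet.ncard) :
    Gs.edgeNumber ≤ Hs.edgeNumber := by
  have hratio : ∀ n, ((Hs.G n).edgeSet.ncard : ℝ) / Nat.card (V n) ≤ Hs.degBound := by
    intro n
    have := Hs.finite n
    have := (Hs.connected n).nonempty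
    have hcard : 0 < (Nat.card (V n) : ℝ) := by exact_mod_cast Nat.card_pos
    rw [div_le_iff₀ hcard]
    have := (Hs.G n).ncard_edgeSet_le_ncard_mul (s := Set.univ)
      (fun e _ => ⟨e.out.1, Set.mem_univ _, Sym2.out_fst_mem e⟩) fun x _ => Hs.deg_le n x
    rw [Set.ncard_univ] at this
    exact_mod_cast this.trans_eq (mul_comm _ _)
  exact liminf_le_liminf
    (Eventually.of_forall fun n =>
      div_le_div_of_nonneg_right (by exact_mod_cast h n) (by positivity))
    (isBoundedUnder_of ⟨0, fun n => by positivity⟩)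
    (isCoboundedUnder_ge_of_eventually_le _ (Eventually.of_forall hratio))

end GraphSeq

theorem stmt0_general {V : ℕ → Type} (Gs' : GraphSeq V)
    (T : ∀ n, Set (V n))
    (hT : ∀ n, T n = {x : V n | ((Gs'.G n).neighborSet x).ncard = 1})
    (Gs : GraphSeq (fun n => ↥((T n)ᶜ))) :
    ∀ ε : ℝ, 0 < ε → ∃ Gε : GraphSeq V,
      Gs'.equivSeq Gε ∧
      Gε.edgeNumber ≤ Gs'.cost + ε ∧
      ∀ n, ∀ x y : V n,
        (((Gε.G n).Adj x y ∧ ¬ (Gs'.G n).Adj x y) ∨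
          ((Gs'.G n).Adj x y ∧ ¬ (Gε.G n).Adj x y)) →
        x ∈ (T n)ᶜ ∧ y ∈ (T n)ᶜ := by
  intro ε hε
  obtain ⟨Hs, ⟨L, hL, hLip⟩, hHs⟩ :=
    Gs'.exists_equivSeq_edgeNumber_lt (lt_add_of_pos_right _ hε)
  have := Gs'.finite
  have hS : ∀ n, ((T n)ᶜ).Nonempty := fun n =>
    Set.nonempty_coe_sort.mp (Gs.connected n).nonempty
  have hleaf : ∀ n, ∀ x ∉ (T n)ᶜ, ((Gs'.G n).neighborSet x).ncard ≤ 1 := by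
    intro n x hx
    rw [hT n, Set.notMem_compl_iff] at hx
    exact hx.le
  have hSG : ∀ n, ∀ a ∉ (T n)ᶜ, ∃ b ∈ (T n)ᶜ, (Gs'.G n).Adj a b := by
    intro n a ha
    rw [Set.notMem_compl_iff, hT n] at ha
    obtain ⟨z, hz⟩ := hS n
    rw [hT n] at hz
    obtain ⟨b, hab, hb⟩ := (Gs'.connected n).exists_adj_ncard_neighborSet_ne_one ⟨z, hz⟩ ha
    exact ⟨b, by rw [hT n]; exact hb, hab⟩
  let Gε : GraphSeq V :=
    { G := fun n => (Gs'.G n).rewire (Hs.G n) (T n)ᶜ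
      finite := Gs'.finite
      connected := fun n => SimpleGraph.rewire_connected (Gs'.connected n) (Hs.connected n) (hLip n)
      degBound := (Gs'.degBound + 1) ^ (L * (2 * L + 1))
      deg_le := fun n => SimpleGraph.ncard_neighborSet_rewire_le (Gs'.deg_le n) (Gs'.connected n)
        (Hs.connected n) (hS n) (hSG n) (hLip n)
      card_tendsto := Gs'.card_tendsto }
  refine ⟨Gε, ⟨L * (2 * L + 1), by positivity, fun n x y => ⟨?_, ?_⟩⟩, ?_, fun n x y h =>
    SimpleGraph.mem_of_xor_rewire_adj (Hs.connected n) (hS n) h⟩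
  · exact (SimpleGraph.dist_rewire_le (Gs'.connected n) (Hs.connected n) (hLip n) x y).trans
      (Nat.mul_le_mul_right _ (Nat.le_mul_of_pos_right _ (by omega)))
  · exact SimpleGraph.dist_le_rewire (Gs'.connected n) (Hs.connected n) (hS n) (hSG n) (hLip n) x y
  · have hedges : ∀ n, (Gε.G n).edgeSet.ncard ≤ (Hs.G n).edgeSet.ncard := fun n =>
      SimpleGraph.ncard_edgeSet_rewire_le (hleaf n) (Hs.connected n) (hS n)
    exact (GraphSeq.edgeNumber_le_edgeNumber hedges).trans hHs.le

/-- Lemma 1: given `𝒢'` and the sequence `𝒢` obtained by deleting the terminal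
(degree-one) vertices, for every `ε > 0` there is `𝒢'_ε ≃ 𝒢'` with
`e(𝒢'_ε) ≤ c(𝒢') + ε`, all of whose edge changes have both endpoints non-terminal. -/
theorem stmt0 {V : ℕ → Type} (Gs' : GraphSeq V)
    (T : ∀ n, Set (V n))
    (hT : ∀ n, T n = {x : V n | ((Gs'.G n).neighborSet x).ncard = 1})
    (Gs : GraphSeq (fun n => ↥((T n)ᶜ)))
    (hGs : ∀ n, Gs.G n = (Gs'.G n).induce ((T n)ᶜ)) :
    ∀ ε : ℝ, 0 < ε → ∃ Gε : GraphSeq V,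
      Gs'.equivSeq Gε ∧
      Gε.edgeNumber ≤ Gs'.cost + ε ∧
      ∀ n, ∀ x y : V n,
        (((Gε.G n).Adj x y ∧ ¬ (Gs'.G n).Adj x y) ∨
          ((Gs'.G n).Adj x y ∧ ¬ (Gε.G n).Adj x y)) →
        x ∈ (T n)ᶜ ∧ y ∈ (T n)ᶜ :=
  stmt0_general Gs' T hT Gs
end

section
/- If two graph sequences 𝒢 and ℋ are coarsely equivalent and 𝒢 is hyperfinite, then ℋ is hyperfinite. In other words, hyperfiniteness is an invariant of coarse equivalence of graph sequences. -/
open Filter Topology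

/-!
Let `f : G_n → H_n` be the quasi-isometries and `x : H_n → G_n` a coarse inverse, so that
`f (x w)` is `A`-close to `w`. Given a sparse edge set `E_n` cutting `G_n` into pieces of at most
`K` vertices, cut those edges of `H_n` whose endpoints `x` sends to different pieces. Every piece
of `H_n` then maps into a piece of `G_n` with fibres of bounded size, so it is bounded. The
endpoints of a cut edge go to vertices at bounded distance in `G_n`, so a geodesic between them
crosses an edge of `E_n` close to both; by bounded degree each edge of `E_n` is charged for
boundedly many cut edges. Finally `|V(G_n)| ≤ c |V(H_n)|` because the fibres of `f` have bounded
diameter, so the density of cut edges in `H_n` is at most a constant times that of `E_n`.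
-/

namespace Set

variable {α β ι : Type*}

theorem ncard_biUnion_le_mul {s : Set ι} (hs : s.Finite) {t : ι → Set α} {C : ℕ}
    (ht : ∀ i ∈ s, (t i).ncard ≤ C) : (⋃ i ∈ s, t i).ncard ≤ s.ncard * C :=
  calc (⋃ i ∈ s, t i).ncard = (⋃ i ∈ hs.toFinset, t i).ncard := by simp
    _ ≤ ∑ i ∈ hs.toFinset, (t i).ncard := Finset.set_ncard_biUnion_le _ _
    _ ≤ hs.toFinset.card • C := Finset.sum_le_card_nsmul _ _ _ (by simpa using ht)
    _ = s.ncard * C := by rw [smul_eq_mul, ncard_eq_toFinset_card s hs]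

theorem ncard_le_ncard_mul_of_mapsTo [Finite α] {f : α → β} {s : Set α} {t : Set β}
    (ht : t.Finite) (hf : MapsTo f s t) {C : ℕ} (hC : ∀ b ∈ t, {a | f a = b}.ncard ≤ C) :
    s.ncard ≤ t.ncard * C :=
  (ncard_le_ncard (fun _ ha => mem_biUnion (hf ha) rfl) (toFinite _)).trans
    (ncard_biUnion_le_mul ht hC)

end Set

theorem Sym2.ncard_biUnion_le {α β : Type*} {e : Sym2 α} {t : α → Set β} {C : ℕ}
    (ht : ∀ a ∈ e, (t a).ncard ≤ C) : (⋃ a ∈ e, t a).ncard ≤ 2 * C := by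
  induction e using Sym2.ind with
  | _ a b =>
    have hab : (⋃ c ∈ s(a, b), t c) = t a ∪ t b := by
      ext; simp [Sym2.mem_iff]
    rw [hab, two_mul]
    exact (Set.ncard_union_le _ _).trans
      (add_le_add (ht a (Sym2.mem_mk_left a b)) (ht b (Sym2.mem_mk_right a b)))

theorem Nat.le_ceil_of_div_sub_le {d : ℕ} {A k : ℝ} (hA : 0 < A) (h : (d : ℝ) / A - A ≤ k) :
    d ≤ ⌈(k + A) * A⌉₊ := by
  have hd : (d : ℝ) ≤ (k + A) * A := (div_le_iff₀ hA).mp (by linarith)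
  exact_mod_cast hd.trans (Nat.le_ceil _)

theorem Filter.limsup_lt_of_le_const_mul {ι : Type*} {l : Filter ι} [l.NeBot] {u v : ι → ℝ}
    {c ε : ℝ} (hc : 0 ≤ c) (hε : 0 < ε) (hu : ∀ i, 0 ≤ u i) (huv : ∀ i, u i ≤ c * v i)
    (hv : IsBoundedUnder (· ≤ ·) l v) (hlim : limsup v l < ε / (c + 1)) :
    limsup u l < ε := by
  have hcε : c * (ε / (c + 1)) < ε := by
    rw [mul_div_assoc', div_lt_iff₀ (by positivity)]
    nlinarith
  refine lt_of_le_of_lt (limsup_le_of_le (isCoboundedUnder_le_of_le l hu) ?_) hcε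
  filter_upwards [eventually_lt_of_limsup_lt hlim hv] with i hi
  exact (huv i).trans (mul_le_mul_of_nonneg_left hi.le hc)

theorem div_le_mul_div_of_le_mul {a b m n c₁ c₂ : ℕ} (ha : a ≤ b * c₁) (hm : 0 < m)
    (hmn : m ≤ n * c₂) : (a : ℝ) / n ≤ (c₁ * c₂ : ℝ) * (b / m) := by
  rcases n.eq_zero_or_pos with rfl | hn
  · simp only [Nat.cast_zero, div_zero]
    positivity
  rw [mul_div_assoc', div_le_div_iff₀ (by positivity) (by positivity)]
  have ha' : (a : ℝ) ≤ b * c₁ := by exact_mod_cast ha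
  have hmn' : (m : ℝ) ≤ n * c₂ := by exact_mod_cast hmn
  calc (a : ℝ) * m ≤ (b * c₁) * (n * c₂) := mul_le_mul ha' hmn' (by positivity) (by positivity)
    _ = c₁ * c₂ * b * n := by ring

namespace SimpleGraph

variable {V W : Type*} {G : SimpleGraph V} {H : SimpleGraph W} {d : ℕ}

theorem ncard_incidenceSet_le {v : V} (hd : (G.neighborSet v).ncard ≤ d) :
    (G.incidenceSet v).ncard ≤ d := by
  classical
  rwa [← Nat.card_coe_set_eq, Nat.card_congr (G.incidenceSetEquivNeighborSet v),
    Nat.card_coe_set_eq]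

theorem ncard_edgeSet_le [Finite V] (hd : ∀ v, (G.neighborSet v).ncard ≤ d) :
    G.edgeSet.ncard ≤ Nat.card V * d := by
  have hsub : G.edgeSet ⊆ ⋃ v ∈ (Set.univ : Set V), G.incidenceSet v := by
    intro e he
    induction e using Sym2.ind with
    | _ a b => exact Set.mem_biUnion (Set.mem_univ a) ⟨he, Sym2.mem_mk_left a b⟩
  calc G.edgeSet.ncard ≤ (Set.univ : Set V).ncard * d :=
        (Set.ncard_le_ncard hsub (Set.toFinite _)).trans
          (Set.ncard_biUnion_le_mul (Set.toFinite _) fun v _ => ncard_incidenceSet_le (hd v))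
    _ = Nat.card V * d := by rw [Set.ncard_univ]

-- Connectedness is needed: `G.dist u v = 0` whenever `v` is not reachable from `u`.
theorem Connected.ncard_setOf_dist_le_le [Finite V] (hG : G.Connected)
    (hd : ∀ v, (G.neighborSet v).ncard ≤ d) (u : V) (r : ℕ) :
    {v | G.dist u v ≤ r}.ncard ≤ (d + 1) ^ r := by
  induction r with
  | zero =>
    have hu : {v | G.dist u v ≤ 0} = {u} := by
      ext v
      simp only [Set.mem_ofPred_eq, Nat.le_zero, hG.dist_eq_zero_iff, Set.mem_singleton_iff,
        eq_comm]
    rw [hu, Set.ncard_singleton, pow_zero]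
  | succ r ih =>
    have hsub : {v | G.dist u v ≤ r + 1} ⊆
        ⋃ z ∈ {v | G.dist u v ≤ r}, insert z (G.neighborSet z) := by
      intro v hv
      rcases (show G.dist u v ≤ r + 1 from hv).lt_or_eq with hlt | heq
      · exact Set.mem_biUnion (Nat.lt_succ_iff.mp hlt) (Set.mem_insert v _)
      obtain ⟨p, hp⟩ := hG.exists_walk_length_eq_dist v u
      rw [dist_comm, heq] at hp
      cases p with
      | nil => simp at hp
      | @cons _ z _ hvz q =>
        have hq : q.length = r := by simpa using hp
        have hz : G.dist u z ≤ r := dist_comm (G := G) ▸ hq ▸ dist_le q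
        exact Set.mem_biUnion hz (Set.mem_insert_of_mem z hvz.symm)
    calc {v | G.dist u v ≤ r + 1}.ncard ≤ {v | G.dist u v ≤ r}.ncard * (d + 1) :=
          (Set.ncard_le_ncard hsub (Set.toFinite _)).trans
            (Set.ncard_biUnion_le_mul (Set.toFinite _) fun z _ =>
              (Set.ncard_insert_le _ _).trans (Nat.succ_le_succ (hd z)))
      _ ≤ (d + 1) ^ (r + 1) := by rw [pow_succ]; exact Nat.mul_le_mul_right _ ih

theorem Connected.exists_mem_dist_le_of_not_reachable_deleteEdges (hG : G.Connected)
    {E : Set (Sym2 V)} {u v : V} (h : ¬(G.deleteEdges E).Reachable u v) :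
    ∃ e ∈ E, ∃ a ∈ e, G.dist u a ≤ G.dist u v := by
  classical
  obtain ⟨p, hp⟩ := hG.exists_walk_length_eq_dist u v
  obtain ⟨e, hpe, heE⟩ : ∃ e ∈ p.edges, e ∈ E := by
    by_contra! hp'
    exact h ⟨p.toDeleteEdges E hp'⟩
  induction e using Sym2.ind with
  | _ a b =>
    have ha := p.fst_mem_support_of_mem_edges hpe
    refine ⟨s(a, b), heE, a, Sym2.mem_mk_left a b, ?_⟩
    calc G.dist u a ≤ (p.takeUntil a ha).length := dist_le _
      _ ≤ G.dist u v := hp ▸ p.length_takeUntil_le_length ha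

theorem Connected.card_le_card_mul_of_fiber_dist_le [Finite V] [Finite W] (hG : G.Connected)
    (hd : ∀ v, (G.neighborSet v).ncard ≤ d) {f : V → W} {r : ℕ}
    (hf : ∀ a b, f a = f b → G.dist a b ≤ r) : Nat.card V ≤ Nat.card W * (d + 1) ^ r := by
  rw [← Set.ncard_univ V, ← Set.ncard_univ W]
  refine Set.ncard_le_ncard_mul_of_mapsTo (Set.toFinite _) (Set.mapsTo_univ f _) fun w _ => ?_
  rcases Set.eq_empty_or_nonempty {a | f a = w} with he | ⟨a, ha⟩
  · simp [he]
  refine (Set.ncard_le_ncard (fun b hb => ?_) (Set.toFinite _)).trans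
    (hG.ncard_setOf_dist_le_le hd a r)
  exact hf a b (ha.trans hb.symm)

theorem Connected.ncard_fiber_le [Finite W] (hH : H.Connected)
    (hd : ∀ w, (H.neighborSet w).ncard ≤ d) {f : V → W} {x : W → V} {r : ℕ}
    (hx : ∀ w, H.dist (f (x w)) w ≤ r) (v : V) : {w | x w = v}.ncard ≤ (d + 1) ^ r :=
  (Set.ncard_le_ncard (fun w (hw : x w = v) => hw ▸ hx w) (Set.toFinite _)).trans
    (hH.ncard_setOf_dist_le_le hd (f v) r)

theorem Connected.dist_le_of_adj (hH : H.Connected) {A : ℝ} (hA : 0 < A) {f : V → W}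
    (hf : ∀ a b, (G.dist a b : ℝ) / A - A ≤ H.dist (f a) (f b)) {x : W → V} {r : ℕ}
    (hx : ∀ w, H.dist (f (x w)) w ≤ r) {w w' : W} (h : H.Adj w w') :
    G.dist (x w) (x w') ≤ ⌈(2 * r + 1 + A) * A⌉₊ := by
  have hfx : H.dist (f (x w)) (f (x w')) ≤ 2 * r + 1 := by
    have h₁ := hH.dist_triangle (u := f (x w)) (v := w) (w := f (x w'))
    have h₂ := hH.dist_triangle (u := w) (v := w') (w := f (x w'))
    have h₃ := hx w'
    rw [dist_comm] at h₃
    rw [dist_eq_one_iff_adj.mpr h] at h₂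
    linarith [hx w]
  exact Nat.le_ceil_of_div_sub_le hA ((hf _ _).trans (by exact_mod_cast hfx))

def pullbackCut (G : SimpleGraph V) (E : Set (Sym2 V)) (H : SimpleGraph W) (x : W → V) :
    Set (Sym2 W) :=
  {e ∈ H.edgeSet | ∃ w w', e = s(w, w') ∧ ¬(G.deleteEdges E).Reachable (x w) (x w')}

variable {E : Set (Sym2 V)} {x : W → V}

theorem Reachable.of_deleteEdges_pullbackCut {w w' : W}
    (h : (H.deleteEdges (pullbackCut G E H x)).Reachable w w') :
    (G.deleteEdges E).Reachable (x w) (x w') := by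
  obtain ⟨p⟩ := h
  induction p with
  | nil => exact Reachable.rfl
  | @cons u v _ huv _ ih =>
    rw [deleteEdges_adj] at huv
    refine Reachable.trans ?_ ih
    by_contra hxuv
    exact huv.2 ⟨huv.1, u, v, rfl, hxuv⟩

theorem ncard_reachable_deleteEdges_pullbackCut_le [Finite V] [Finite W] {K C : ℕ}
    (hE : ∀ v, {v' | (G.deleteEdges E).Reachable v v'}.ncard ≤ K)
    (hx : ∀ v, {w | x w = v}.ncard ≤ C) (w : W) :
    {w' | (H.deleteEdges (pullbackCut G E H x)).Reachable w w'}.ncard ≤ K * C :=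
  (Set.ncard_le_ncard_mul_of_mapsTo (f := x) (t := {v | (G.deleteEdges E).Reachable (x w) v})
    (Set.toFinite _) (fun _ h => Reachable.of_deleteEdges_pullbackCut h) fun v _ => hx v).trans
    (Nat.mul_le_mul_right _ (hE (x w)))

theorem ncard_pullbackCut_le [Finite V] [Finite W] (hG : G.Connected) {dG dH C R : ℕ}
    (hdG : ∀ v, (G.neighborSet v).ncard ≤ dG) (hdH : ∀ w, (H.neighborSet w).ncard ≤ dH)
    (hx : ∀ v, {w | x w = v}.ncard ≤ C) (hR : ∀ w w', H.Adj w w' → G.dist (x w) (x w') ≤ R) :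
    (pullbackCut G E H x).ncard ≤ E.ncard * (2 * ((dG + 1) ^ R * C) * dH) := by
  have hsub : pullbackCut G E H x ⊆
      ⋃ e ∈ E, ⋃ w ∈ (⋃ a ∈ e, {w | G.dist a (x w) ≤ R}), H.incidenceSet w := by
    rintro _ ⟨he, w, w', rfl, hww'⟩
    obtain ⟨e, heE, a, hae, ha⟩ := hG.exists_mem_dist_le_of_not_reachable_deleteEdges hww'
    have haw : G.dist a (x w) ≤ R := by rw [dist_comm]; exact ha.trans (hR w w' he)
    simp only [Set.mem_iUnion]
    exact ⟨e, heE, w, ⟨a, hae, haw⟩, he, Sym2.mem_mk_left w w'⟩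
  refine (Set.ncard_le_ncard hsub (Set.toFinite _)).trans
    (Set.ncard_biUnion_le_mul (Set.toFinite _) fun e _ => ?_)
  refine (Set.ncard_biUnion_le_mul (Set.toFinite _) fun w _ =>
    ncard_incidenceSet_le (hdH w)).trans (Nat.mul_le_mul_right _ ?_)
  refine Sym2.ncard_biUnion_le fun a _ => ?_
  exact (Set.ncard_le_ncard_mul_of_mapsTo (f := x) (Set.toFinite _) (fun w hw => hw)
    fun v _ => hx v).trans (Nat.mul_le_mul_right _ (hG.ncard_setOf_dist_le_le hdG a R))

end SimpleGraph

open SimpleGraph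

/-- Hyperfiniteness is a coarse invariant of graph sequences. -/
theorem stmt4 {V W : ℕ → Type} (Gs : GraphSeq V) (Hs : GraphSeq W)
    (h : coarseEquiv Gs Hs) (hh : Gs.hyperfinite) : Hs.hyperfinite := by
  have := Gs.finite
  have := Hs.finite
  obtain ⟨A, hA, hQI⟩ := h
  choose f hf x hx using hQI
  have hxr (n w) : (Hs.G n).dist (f n (x n w)) w ≤ ⌈A⌉₊ := by
    exact_mod_cast (hx n w).trans (Nat.le_ceil A)
  have hfr (n a b) (hab : f n a = f n b) : (Gs.G n).dist a b ≤ ⌈A * A⌉₊ := by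
    simpa using Nat.le_ceil_of_div_sub_le hA (k := 0) (by simpa [hab] using (hf n a b).1)
  set C := (Hs.degBound + 1) ^ ⌈A⌉₊
  set c₁ := 2 * ((Gs.degBound + 1) ^ ⌈(2 * ⌈A⌉₊ + 1 + A) * A⌉₊ * C) * Hs.degBound
  set c₂ := (Gs.degBound + 1) ^ ⌈A * A⌉₊
  have hfib (n v) : {w | x n w = v}.ncard ≤ C :=
    (Hs.connected n).ncard_fiber_le (Hs.deg_le n) (hxr n) v
  intro ε hε
  obtain ⟨K, hK, E, hEG, hlim, hcomp⟩ := hh (ε / ((c₁ : ℝ) * c₂ + 1)) (by positivity)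
  refine ⟨K * C, by positivity, fun n => pullbackCut (Gs.G n) (E n) (Hs.G n) (x n),
    fun n => Set.sep_subset _ _, ?_,
    fun n => ncard_reachable_deleteEdges_pullbackCut_le (hcomp n) (hfib n)⟩
  refine Filter.limsup_lt_of_le_const_mul (by positivity) hε (fun n => by positivity)
    (fun n => div_le_mul_div_of_le_mul ?_ ?_ ?_) ?_ hlim
  · exact ncard_pullbackCut_le (Gs.connected n) (Gs.deg_le n) (Hs.deg_le n) (hfib n)
      fun w w' => (Hs.connected n).dist_le_of_adj hA (fun a b => (hf n a b).1) (hxr n)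
  · exact Nat.card_pos_iff.mpr ⟨(Gs.connected n).nonempty, inferInstance⟩
  · exact (Gs.connected n).card_le_card_mul_of_fiber_dist_le (Gs.deg_le n) (hfr n)
  · refine isBoundedUnder_of ⟨Gs.degBound, fun n => div_le_of_le_mul₀ (by positivity)
      (by positivity) ?_⟩
    rw [mul_comm]
    exact_mod_cast (Set.ncard_le_ncard (hEG n)).trans (ncard_edgeSet_le (Gs.deg_le n))
end

section
/- Let G be a graph in which every vertex has degree at most D, and let ε > 0. Let φ : V(G) → ℝ be a finitely supported function with ℓ¹-norm 1 such that the sum over all edges (x,y) of G of |φ(x) − φ(y)| is less than ε. Then there exists a nonempty subset F of the support of φ such that |∂F| < ε·|F|, where ∂F denotes the set of edges of G with exactly one endpoint in F. -/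
open Filter Topology

/-!
Peel off the lowest level set. If `m > 0` is the least nonzero value of `g ≥ 0`, then
`g = max (g - m) 0 + m • 1_{supp g}`, and since both summands are monotone functions of `g`, this
splits both `∑ g` and the edge variation `∑ |g x - g y|` additively; the indicator contributes
`m |supp g|` and `m |∂ supp g|` respectively. So if every nonempty `F ⊆ supp φ` had
`|∂F| ≥ ε |F|`, induction on the size of the support would give
`ε = ε ∑ |φ| ≤ var |φ| ≤ var φ < ε`.
-/

open Function Set

section EdgeVariation

variable {V : Type*}

noncomputable def absDiff (g : V → ℝ) : Sym2 V → ℝ :=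
  Sym2.lift ⟨fun x y => |g x - g y|, fun x y => abs_sub_comm (g x) (g y)⟩

@[simp] lemma absDiff_mk (g : V → ℝ) (x y : V) : absDiff g s(x, y) = |g x - g y| := rfl

lemma absDiff_nonneg (g : V → ℝ) (e : Sym2 V) : 0 ≤ absDiff g e := by
  induction e using Sym2.ind with
  | _ x y => exact abs_nonneg _

lemma abs_sub_eq_abs_sub_max_add_abs_sub_min (a b m : ℝ) :
    |a - b| = |max (a - m) 0 - max (b - m) 0| + |min a m - min b m| := by
  grind

lemma absDiff_eq_absDiff_max_add_absDiff_min (g : V → ℝ) (m : ℝ) (e : Sym2 V) :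
    absDiff g e = absDiff (fun x => max (g x - m) 0) e + absDiff (fun x => min (g x) m) e := by
  induction e using Sym2.ind with
  | _ x y => exact abs_sub_eq_abs_sub_max_add_abs_sub_min (g x) (g y) m

lemma absDiff_abs_le (g : V → ℝ) (e : Sym2 V) : absDiff (fun x => |g x|) e ≤ absDiff g e := by
  induction e using Sym2.ind with
  | _ x y => exact abs_abs_sub_abs_le_abs_sub (g x) (g y)

lemma min_eq_indicator_support {g : V → ℝ} {m : ℝ} (hm : 0 ≤ m)
    (hmg : ∀ x ∈ support g, m ≤ g x) :
    (fun x => min (g x) m) = (support g).indicator fun _ => m := by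
  ext x
  by_cases hx : x ∈ support g
  · rw [indicator_of_mem hx, min_eq_right (hmg x hx)]
  · rw [indicator_of_notMem hx, notMem_support.mp hx, min_eq_left hm]

lemma support_max_sub_zero (g : V → ℝ) (m : ℝ) :
    support (fun x => max (g x - m) 0) = {x | m < g x} := by
  ext x
  simp

lemma finsum_mem_const_of_finite {s : Set V} (hs : s.Finite) (c : ℝ) :
    ∑ᶠ _ ∈ s, c = c * s.ncard := by
  rw [finsum_mem_eq_finite_toFinset_sum _ hs, Finset.sum_const, nsmul_eq_mul,
    ncard_eq_toFinset_card _ hs, mul_comm]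

lemma finsum_eq_finsum_max_add_mul_ncard {g : V → ℝ} {m : ℝ} (hm : 0 ≤ m)
    (hmg : ∀ x ∈ support g, m ≤ g x) (hfin : (support g).Finite) :
    ∑ᶠ x, g x = ∑ᶠ x, max (g x - m) 0 + m * (support g).ncard := by
  have hψ : (support fun x => max (g x - m) 0).Finite := by
    rw [support_max_sub_zero]
    exact hfin.subset fun x hx => (hm.trans_lt hx).ne'
  have hmin : (support fun x => min (g x) m).Finite := by
    rw [min_eq_indicator_support hm hmg]
    exact hfin.subset support_indicator_subset
  have hconst : ∑ᶠ x, min (g x) m = m * (support g).ncard := by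
    rw [min_eq_indicator_support hm hmg, ← finsum_mem_def, finsum_mem_const_of_finite hfin]
  rw [← hconst, ← finsum_add_distrib hψ hmin]
  exact finsum_congr fun x => by grind

variable (G : SimpleGraph V)

noncomputable def edgeVariation (g : V → ℝ) : ℝ :=
  ∑ᶠ e ∈ G.edgeSet, absDiff g e

lemma edgeVariation_nonneg (g : V → ℝ) : 0 ≤ edgeVariation G g :=
  finsum_nonneg fun e => finsum_nonneg fun _ => absDiff_nonneg g e

variable {G}

lemma edgeBoundary_subset_edgeSet (F : Set V) : edgeBoundary G F ⊆ G.edgeSet :=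
  fun _ he => he.1

lemma mk_mem_edgeBoundary_iff {F : Set V} {x y : V} (h : G.Adj x y) :
    s(x, y) ∈ edgeBoundary G F ↔ Xor (x ∈ F) (y ∈ F) := by
  constructor
  · rintro ⟨-, a, b, hab, ha, hb⟩
    rcases Sym2.eq_iff.mp hab with ⟨rfl, rfl⟩ | ⟨rfl, rfl⟩
    · exact Or.inl ⟨ha, hb⟩
    · exact Or.inr ⟨ha, hb⟩
  · rintro (⟨hx, hy⟩ | ⟨hy, hx⟩)
    · exact ⟨h, x, y, rfl, hx, hy⟩
    · exact ⟨h, y, x, Sym2.eq_swap, hy, hx⟩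

lemma absDiff_indicator_const {F : Set V} {c : ℝ} (hc : 0 ≤ c) {e : Sym2 V}
    (he : e ∈ G.edgeSet) :
    absDiff (F.indicator fun _ => c) e = (edgeBoundary G F).indicator (fun _ => c) e := by
  induction e using Sym2.ind with
  | _ x y =>
    by_cases hx : x ∈ F <;> by_cases hy : y ∈ F <;>
      simp [mk_mem_edgeBoundary_iff (G.mem_edgeSet.mp he), hx, hy, abs_of_nonneg hc]

lemma edgeSet_inter_support_absDiff_subset {s : Set V} {g : V → ℝ} (hg : support g ⊆ s) :
    G.edgeSet ∩ support (absDiff g) ⊆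
      edgeBoundary G s ∪ (fun p : V × V => s(p.1, p.2)) '' (s ×ˢ s) := by
  rintro e ⟨he, hne⟩
  induction e using Sym2.ind with
  | _ x y =>
    have hxy : x ∈ s ∨ y ∈ s := by
      by_contra! h
      simp [notMem_support.mp (mt (@hg x) h.1), notMem_support.mp (mt (@hg y) h.2)] at hne
    by_cases hx : x ∈ s <;> by_cases hy : y ∈ s
    · exact Or.inr ⟨(x, y), ⟨hx, hy⟩, rfl⟩
    all_goals exact Or.inl ((mk_mem_edgeBoundary_iff (G.mem_edgeSet.mp he)).mpr (by tauto))

lemma finite_edgeSet_inter_support_absDiff {s : Set V} (hs : s.Finite)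
    (hb : (edgeBoundary G s).Finite) {g : V → ℝ} (hg : support g ⊆ s) :
    (G.edgeSet ∩ support (absDiff g)).Finite :=
  (hb.union ((hs.prod hs).image _)).subset (edgeSet_inter_support_absDiff_subset hg)

lemma edgeVariation_eq_edgeVariation_max_add_mul_ncard {g : V → ℝ} {m : ℝ} (hm : 0 ≤ m)
    (hmg : ∀ x ∈ support g, m ≤ g x) (hfin : (support g).Finite)
    (hb : (edgeBoundary G (support g)).Finite) :
    edgeVariation G g =
      edgeVariation G (fun x => max (g x - m) 0) + m * (edgeBoundary G (support g)).ncard := by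
  have hψ : support (fun x => max (g x - m) 0) ⊆ support g := by
    rw [support_max_sub_zero]
    exact fun x hx => (hm.trans_lt hx).ne'
  have hmin : support (fun x => min (g x) m) ⊆ support g := by
    rw [min_eq_indicator_support hm hmg]
    exact support_indicator_subset
  have hboundary : ∑ᶠ e ∈ G.edgeSet, absDiff (fun x => min (g x) m) e =
      m * (edgeBoundary G (support g)).ncard := by
    calc ∑ᶠ e ∈ G.edgeSet, absDiff (fun x => min (g x) m) e
        = ∑ᶠ e ∈ G.edgeSet, (edgeBoundary G (support g)).indicator (fun _ => m) e := by
          rw [min_eq_indicator_support hm hmg]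
          exact finsum_mem_congr rfl fun e he => absDiff_indicator_const hm he
      _ = ∑ᶠ _ ∈ edgeBoundary G (support g), m := by
          rw [finsum_mem_def, indicator_indicator,
            inter_eq_right.mpr (edgeBoundary_subset_edgeSet _), ← finsum_mem_def]
      _ = m * (edgeBoundary G (support g)).ncard := finsum_mem_const_of_finite hb m
  rw [edgeVariation, edgeVariation, ← hboundary, ← finsum_mem_add_distrib'
    (finite_edgeSet_inter_support_absDiff hfin hb hψ)
    (finite_edgeSet_inter_support_absDiff hfin hb hmin)]
  exact finsum_mem_congr rfl fun e _ => absDiff_eq_absDiff_max_add_absDiff_min g m e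

lemma edgeVariation_abs_le {g : V → ℝ} (hg : (G.edgeSet ∩ support (absDiff g)).Finite) :
    edgeVariation G (fun x => |g x|) ≤ edgeVariation G g := by
  have habs : G.edgeSet ∩ support (absDiff fun x => |g x|) ⊆ G.edgeSet ∩ support (absDiff g) :=
    fun e ⟨he, hne⟩ => ⟨he, fun h0 => hne (le_antisymm
      ((absDiff_abs_le g e).trans h0.le) (absDiff_nonneg _ e))⟩
  rw [edgeVariation, edgeVariation, finsum_mem_def, finsum_mem_def]
  refine finsum_le_finsum' ?_ ?_ fun e => ?_
  · rw [HasFiniteSupport, support_indicator]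
    exact hg.subset habs
  · rw [HasFiniteSupport, support_indicator]
    exact hg
  · by_cases he : e ∈ G.edgeSet
    · simp only [indicator_of_mem he, absDiff_abs_le]
    · simp only [indicator_of_notMem he, le_refl]

-- `ncard` of an infinite set is `0`, so a positive lower bound on it forces finiteness.
lemma finite_edgeBoundary_of_mul_ncard_le {ε : ℝ} (hε : 0 < ε) {F : Set V} (hF : F.Finite)
    (hne : F.Nonempty) (h : ε * F.ncard ≤ (edgeBoundary G F).ncard) :
    (edgeBoundary G F).Finite := by
  have : 0 < ε * F.ncard := mul_pos hε (by exact_mod_cast (ncard_pos hF).mpr hne)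
  exact finite_of_ncard_pos (by exact_mod_cast this.trans_le h)

theorem mul_finsum_le_edgeVariation {ε : ℝ} (hε : 0 < ε) {g : V → ℝ} (hg : 0 ≤ g)
    (hfin : (support g).Finite)
    (hF : ∀ F ⊆ support g, F.Nonempty → ε * F.ncard ≤ (edgeBoundary G F).ncard) :
    ε * ∑ᶠ x, g x ≤ edgeVariation G g := by
  induction hn : (support g).ncard using Nat.strong_induction_on generalizing g with
  | _ n ih =>
  rcases (support g).eq_empty_or_nonempty with hempty | hne
  · simpa [support_eq_empty_iff.mp hempty] using edgeVariation_nonneg G 0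
  obtain ⟨x₀, hx₀, hm_le⟩ := exists_min_image (support g) g hfin hne
  set m := g x₀
  have hm : 0 < m := (hg x₀).lt_of_ne' hx₀
  have hlt : support (fun x => max (g x - m) 0) ⊂ support g := by
    rw [support_max_sub_zero]
    exact ⟨fun x hx => (hm.trans hx).ne', fun h => lt_irrefl m (h hx₀)⟩
  have IH : ε * ∑ᶠ x, max (g x - m) 0 ≤ edgeVariation G fun x => max (g x - m) 0 :=
    ih _ (hn ▸ ncard_lt_ncard hlt hfin) (fun x => le_max_right _ _) (hfin.subset hlt.1)
      (fun F hFs => hF F (hFs.trans hlt.1)) rfl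
  have hboundary := hF _ subset_rfl hne
  calc ε * ∑ᶠ x, g x
      = ε * ∑ᶠ x, max (g x - m) 0 + m * (ε * (support g).ncard) := by
        rw [finsum_eq_finsum_max_add_mul_ncard hm.le hm_le hfin]; ring
    _ ≤ edgeVariation G (fun x => max (g x - m) 0) + m * (edgeBoundary G (support g)).ncard :=
        add_le_add IH (mul_le_mul_of_nonneg_left hboundary hm.le)
    _ = edgeVariation G g := (edgeVariation_eq_edgeVariation_max_add_mul_ncard hm.le hm_le hfin
        (finite_edgeBoundary_of_mul_ncard_le hε hfin hne hboundary)).symm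

end EdgeVariation

theorem stmt8 {V : Type} (G : SimpleGraph V)
    (ε : ℝ) (hε : 0 < ε)
    (φ : V → ℝ) (hsupp : (Function.support φ).Finite)
    (hnorm : ∑ᶠ x, |φ x| = 1)
    (hsum : ∑ᶠ e ∈ G.edgeSet,
      Sym2.lift ⟨fun x y => |φ x - φ y|, fun x y => by simp only []; rw [abs_sub_comm]⟩ e < ε) :
    ∃ F : Set V, F ⊆ Function.support φ ∧ F.Nonempty ∧
      ((edgeBoundary G F).ncard : ℝ) < ε * (F.ncard : ℝ) := by
  by_contra! hlarge
  have hne : (support φ).Nonempty := by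
    rw [support_nonempty_iff]
    rintro rfl
    simp at hnorm
  have habs : support (fun x => |φ x|) = support φ := by
    ext x
    simp
  have hb := finite_edgeBoundary_of_mul_ncard_le hε hsupp hne (hlarge _ subset_rfl hne)
  have hcoarea := mul_finsum_le_edgeVariation (G := G) hε (fun x => abs_nonneg (φ x))
    (habs ▸ hsupp) (habs ▸ hlarge)
  rw [hnorm, mul_one] at hcoarea
  have hvar : edgeVariation G (fun x => |φ x|) ≤ edgeVariation G φ :=
    edgeVariation_abs_le (finite_edgeSet_inter_support_absDiff hsupp hb subset_rfl)
  exact (hcoarea.trans hvar).not_gt hsum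
end

section
/- If a graph sequence 𝒢 = {G_n} has property A, then for every ε > 0 there exist N, S ∈ ℕ such that for every n ≥ N there exist a vertex x_n ∈ V(G_n) and a nonempty subset F_n ⊆ B(x_n, S) (the ball of radius S about x_n in G_n) with |∂F_n| < ε·|F_n|, where ∂F_n denotes the set of edges of G_n with exactly one endpoint in F_n. -/
open Filter Topology

open Finset

lemma coarea {α : Type} [Fintype α] (Adj : α → α → Prop) [DecidableRel Adj] (f : α → ℝ)
    (hf : ∀ x, 0 ≤ f x) (ε : ℝ)
    (h : ∑ x, ∑ y, (if Adj x y then |f x - f y| else 0) < ε * ∑ x, f x) :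
    ∃ t : ℝ, 0 < t ∧ {x | t ≤ f x}.Nonempty ∧
      (({p : α × α | Adj p.1 p.2 ∧ t ≤ f p.1 ∧ f p.2 < t}.ncard : ℝ)
        < ε * ({x | t ≤ f x}.ncard : ℝ)) := by
  classical
  by_contra hcon
  push_neg at hcon
  have hcon' : ∀ t : ℝ, 0 < t → (univ.filter (fun x => t ≤ f x)).Nonempty →
      ε * ((univ.filter (fun x => t ≤ f x)).card : ℝ)
        ≤ (((univ ×ˢ univ).filter
            (fun p : α × α => Adj p.1 p.2 ∧ t ≤ f p.1 ∧ f p.2 < t)).card : ℝ) := by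
    intro t ht hne
    have hsetA : {x | t ≤ f x} = ↑(univ.filter (fun x => t ≤ f x)) := by ext x; simp
    have hsetP : {p : α × α | Adj p.1 p.2 ∧ t ≤ f p.1 ∧ f p.2 < t}
        = ↑((univ ×ˢ univ).filter (fun p : α × α => Adj p.1 p.2 ∧ t ≤ f p.1 ∧ f p.2 < t)) := by
      ext p; simp
    have := hcon t ht (by
      obtain ⟨x, hx⟩ := hne
      exact ⟨x, by simpa using (Finset.mem_filter.mp hx).2⟩)
    rwa [hsetA, hsetP, Set.ncard_coe_finset, Set.ncard_coe_finset] at this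
  set T : Finset ℝ := (univ.image f).filter (fun t => 0 < t) with hT
  set k : ℕ := T.card with hk
  let e : Fin k ≃o {t // t ∈ T} := T.orderIsoOfFin rfl
  have heT : ∀ i : Fin k, (e i : ℝ) ∈ T := fun i => (e i).2
  have hepos : ∀ i : Fin k, 0 < (e i : ℝ) := fun i => (Finset.mem_filter.mp (heT i)).2
  have hemono : ∀ i j : Fin k, i ≤ j → (e i : ℝ) ≤ (e j : ℝ) := fun i j hij =>
    Subtype.coe_le_coe.mpr (e.monotone hij)
  set u : ℕ → ℝ := (fun j => if hj : 0 < j ∧ j ≤ k then (e ⟨j - 1, by omega⟩ : ℝ) else 0) with hu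
  have hu0 : u 0 = 0 := by simp [hu]
  have hue : ∀ i : Fin k, u (i + 1) = (e i : ℝ) := by
    intro i
    have hcond : 0 < (i : ℕ) + 1 ∧ (i : ℕ) + 1 ≤ k := ⟨Nat.succ_pos _, i.2⟩
    simp only [hu, dif_pos hcond]
    have hfin : (⟨(i : ℕ) + 1 - 1, by omega⟩ : Fin k) = i := Fin.ext (by simp)
    rw [hfin]
  set c : α → ℕ := fun x => (T.filter (fun t => t ≤ f x)).card with hc
  have hck : ∀ x, c x ≤ k := fun x => Finset.card_filter_le _ _
  have hbij : ∀ x, ((univ : Finset (Fin k)).filter (fun j => (e j : ℝ) ≤ f x)).card = c x := by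
    intro x
    refine Finset.card_bij (fun j _ => (e j : ℝ)) ?_ ?_ ?_
    · intro j hj; exact Finset.mem_filter.mpr ⟨heT j, (Finset.mem_filter.mp hj).2⟩
    · intro j _ j' _ hjj'; exact e.injective (Subtype.coe_injective hjj')
    · intro t ht
      refine ⟨e.symm ⟨t, (Finset.mem_filter.mp ht).1⟩, ?_, by simp⟩
      rw [Finset.mem_filter]
      refine ⟨Finset.mem_univ _, ?_⟩
      simpa using (Finset.mem_filter.mp ht).2
  have hb : ∀ x (i : Fin k), ((e i : ℝ) ≤ f x ↔ (i : ℕ) < c x) := by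
    intro x i
    constructor
    · intro hle
      have hsub : Finset.Iic i ⊆ (univ : Finset (Fin k)).filter (fun j => (e j : ℝ) ≤ f x) := by
        intro j hj
        exact Finset.mem_filter.mpr
          ⟨Finset.mem_univ _, le_trans (hemono j i (Finset.mem_Iic.mp hj)) hle⟩
      have hcard := Finset.card_le_card hsub
      rw [Fin.card_Iic, hbij] at hcard
      omega
    · intro hlt
      by_contra hnot
      have hsub : (univ : Finset (Fin k)).filter (fun j => (e j : ℝ) ≤ f x) ⊆ Finset.Iio i := by
        intro j hj
        rw [Finset.mem_Iio]
        by_contra hji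
        push_neg at hji
        exact hnot (le_trans (hemono i j hji) (Finset.mem_filter.mp hj).2)
      have hcard := Finset.card_le_card hsub
      rw [Fin.card_Iio, hbij] at hcard
      omega
  have hcc : ∀ x, u (c x) = f x := by
    intro x
    rcases eq_or_lt_of_le (hf x) with h0 | h0
    · have hcx : c x = 0 := by
        rw [hc]
        simp only
        rw [Finset.card_eq_zero, Finset.filter_eq_empty_iff]
        intro t ht
        have htpos : 0 < t := (Finset.mem_filter.mp ht).2
        rw [← h0]
        exact not_le.mpr htpos
      rw [hcx, hu0, ← h0]
    · have hfT : f x ∈ T := Finset.mem_filter.mpr ⟨Finset.mem_image_of_mem f (Finset.mem_univ x), h0⟩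
      set j : Fin k := e.symm ⟨f x, hfT⟩ with hj
      have hej : (e j : ℝ) = f x := by simp [hj]
      have hjc : (j : ℕ) < c x := (hb x j).mp (le_of_eq hej)
      have hckx := hck x
      set i0 : Fin k := ⟨c x - 1, by omega⟩ with hi0
      have hvi0 : (i0 : ℕ) = c x - 1 := rfl
      have hi0c : (i0 : ℕ) < c x := by omega
      have hle1 : (e i0 : ℝ) ≤ f x := (hb x i0).mpr hi0c
      have hle2 : f x ≤ (e i0 : ℝ) := by
        rw [← hej]
        refine hemono j i0 ?_
        rw [Fin.le_def, hvi0]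
        omega
      have hcu : u (c x) = (e i0 : ℝ) := by
        have hcx : c x = (i0 : ℕ) + 1 := by omega
        rw [hcx, hue]
      rw [hcu]; linarith
  have hw : ∀ i ∈ Finset.range k, 0 ≤ u (i + 1) - u i := by
    intro i hi
    rw [Finset.mem_range] at hi
    rcases Nat.eq_zero_or_pos i with h0 | h0
    · subst h0
      rw [hu0, hue ⟨0, hi⟩]
      simpa using (hepos ⟨0, hi⟩).le
    · have h1 : u i = (e ⟨i - 1, by omega⟩ : ℝ) := by
        simp only [hu]
        rw [dif_pos ⟨h0, by omega⟩]
      have h2 : u (i + 1) = (e ⟨i, hi⟩ : ℝ) := hue ⟨i, hi⟩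
      rw [h1, h2, sub_nonneg]
      refine hemono _ _ ?_
      rw [Fin.le_def]
      simp only
      omega
  have hlayer : ∀ x, ∑ i ∈ Finset.range k,
      (if u (i + 1) ≤ f x then u (i + 1) - u i else 0) = f x := by
    intro x
    have h1 : ∀ i ∈ Finset.range k,
        (if u (i + 1) ≤ f x then u (i + 1) - u i else 0)
          = (if i < c x then u (i + 1) - u i else 0) := by
      intro i hi
      rw [Finset.mem_range] at hi
      exact if_congr (by rw [hue ⟨i, hi⟩]; exact hb x ⟨i, hi⟩) rfl rfl
    rw [Finset.sum_congr rfl h1, ← Finset.sum_filter]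
    have hfilter : (Finset.range k).filter (fun i => i < c x) = Finset.range (c x) := by
      ext i
      simp only [Finset.mem_filter, Finset.mem_range]
      have := hck x
      omega
    rw [hfilter, Finset.sum_range_sub u, hu0, hcc x, sub_zero]
  have hpair : ∀ x y, ∑ i ∈ Finset.range k,
      (if u (i + 1) ≤ f x ∧ f y < u (i + 1) then u (i + 1) - u i else 0) ≤ |f x - f y| := by
    intro x y
    have h1 : ∀ i ∈ Finset.range k,
        (if u (i + 1) ≤ f x ∧ f y < u (i + 1) then u (i + 1) - u i else 0)
          = (if c y ≤ i ∧ i < c x then u (i + 1) - u i else 0) := by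
      intro i hi
      rw [Finset.mem_range] at hi
      refine if_congr ?_ rfl rfl
      have h1' := hb x ⟨i, hi⟩
      have h2' := hb y ⟨i, hi⟩
      have hvi : ((⟨i, hi⟩ : Fin k) : ℕ) = i := rfl
      rw [hvi] at h1' h2'
      rw [hue ⟨i, hi⟩]
      constructor
      · rintro ⟨ha, hb'⟩
        refine ⟨?_, h1'.mp ha⟩
        have hnle : ¬ ((e ⟨i, hi⟩ : ℝ) ≤ f y) := not_le.mpr hb'
        rw [h2'] at hnle
        omega
      · rintro ⟨hcy, hcx⟩
        refine ⟨h1'.mpr hcx, ?_⟩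
        have hnlt : ¬ ((i : ℕ) < c y) := by omega
        rw [← h2'] at hnlt
        exact not_le.mp hnlt
    rw [Finset.sum_congr rfl h1, ← Finset.sum_filter]
    have hfilter : (Finset.range k).filter (fun i => c y ≤ i ∧ i < c x)
        = Finset.Ico (c y) (c x) := by
      ext i
      simp only [Finset.mem_filter, Finset.mem_range, Finset.mem_Ico]
      have := hck x
      omega
    rw [hfilter]
    rcases le_or_gt (c x) (c y) with hxy | hxy
    · rw [Finset.Ico_eq_empty (by omega), Finset.sum_empty]
      exact abs_nonneg _
    · rw [Finset.sum_Ico_eq_sub _ hxy.le, Finset.sum_range_sub u, Finset.sum_range_sub u,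
        hu0, hcc, hcc, sub_zero, sub_zero]
      exact le_abs_self _
  have e1 : ∑ x : α, f x = ∑ i ∈ Finset.range k,
      ((univ.filter (fun x => u (i + 1) ≤ f x)).card : ℝ) * (u (i + 1) - u i) := by
    calc ∑ x : α, f x
        = ∑ x : α, ∑ i ∈ Finset.range k, (if u (i + 1) ≤ f x then u (i + 1) - u i else 0) :=
          Finset.sum_congr rfl (fun x _ => (hlayer x).symm)
      _ = ∑ i ∈ Finset.range k, ∑ x : α, (if u (i + 1) ≤ f x then u (i + 1) - u i else 0) :=
          Finset.sum_comm
      _ = _ := by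
          refine Finset.sum_congr rfl fun i _ => ?_
          rw [← Finset.sum_filter, Finset.sum_const, nsmul_eq_mul]
  have e2 : ∑ i ∈ Finset.range k,
      ((((univ ×ˢ univ).filter (fun p : α × α =>
          Adj p.1 p.2 ∧ u (i + 1) ≤ f p.1 ∧ f p.2 < u (i + 1))).card : ℝ)) * (u (i + 1) - u i)
      ≤ ∑ x, ∑ y, (if Adj x y then |f x - f y| else 0) := by
    have hsw : ∀ i ∈ Finset.range k,
        ((((univ ×ˢ univ).filter (fun p : α × α =>
            Adj p.1 p.2 ∧ u (i + 1) ≤ f p.1 ∧ f p.2 < u (i + 1))).card : ℝ)) * (u (i + 1) - u i)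
          = ∑ x, ∑ y, (if Adj x y ∧ u (i + 1) ≤ f x ∧ f y < u (i + 1)
              then u (i + 1) - u i else 0) := by
      intro i _
      rw [Finset.card_filter]
      push_cast
      rw [Finset.sum_product, Finset.sum_mul]
      refine Finset.sum_congr rfl fun x _ => ?_
      rw [Finset.sum_mul]
      refine Finset.sum_congr rfl fun y _ => ?_
      by_cases hc' : Adj x y ∧ u (i + 1) ≤ f x ∧ f y < u (i + 1) <;> simp [hc']
    rw [Finset.sum_congr rfl hsw, Finset.sum_comm]
    refine Finset.sum_le_sum fun x _ => ?_
    rw [Finset.sum_comm]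
    refine Finset.sum_le_sum fun y _ => ?_
    by_cases hAdj : Adj x y
    · simp only [hAdj, true_and, if_true]
      exact hpair x y
    · simp [hAdj]
  have key : ε * ∑ x : α, f x ≤ ∑ x, ∑ y, (if Adj x y then |f x - f y| else 0) := by
    rw [e1, Finset.mul_sum]
    refine le_trans (Finset.sum_le_sum ?_) e2
    intro i hi
    rw [Finset.mem_range] at hi
    have hti : 0 < u (i + 1) := by rw [hue ⟨i, hi⟩]; exact hepos ⟨i, hi⟩
    have hnei : (univ.filter (fun x => u (i + 1) ≤ f x)).Nonempty := by
      have hmem : (e ⟨i, hi⟩ : ℝ) ∈ T := heT ⟨i, hi⟩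
      obtain ⟨x, -, hx⟩ := Finset.mem_image.mp (Finset.mem_filter.mp hmem).1
      exact ⟨x, Finset.mem_filter.mpr ⟨Finset.mem_univ _, by rw [hue ⟨i, hi⟩, hx]⟩⟩
    have hcc' := hcon' (u (i + 1)) hti hnei
    have hwi := hw i (Finset.mem_range.mpr hi)
    calc ε * (((univ.filter (fun x => u (i + 1) ≤ f x)).card : ℝ) * (u (i + 1) - u i))
        = (ε * ((univ.filter (fun x => u (i + 1) ≤ f x)).card : ℝ)) * (u (i + 1) - u i) := by
          ring
      _ ≤ _ := mul_le_mul_of_nonneg_right hcc' hwi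
  linarith
/-- If a graph sequence has property A, then for every `ε > 0` there are `N, S` such that
for all `n ≥ N` there is a nonempty set `F_n` inside a ball of radius `S` with
`|∂F_n| < ε·|F_n|`. -/
theorem stmt9 {V : ℕ → Type} (Gs : GraphSeq V) (hA : Gs.propertyA) :
    ∀ ε : ℝ, 0 < ε → ∃ N S : ℕ, ∀ n, N ≤ n → ∃ x : V n, ∃ F : Set (V n),
      F.Nonempty ∧ F ⊆ {y | (Gs.G n).dist x y ≤ S} ∧
      ((edgeBoundary (Gs.G n) F).ncard : ℝ) < ε * (F.ncard : ℝ) := by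
  intro ε hε
  classical
  have hd1 : (0 : ℝ) < (Gs.degBound : ℝ) + 1 := by positivity
  obtain ⟨S, hS, hξall⟩ := hA (ε / ((Gs.degBound : ℝ) + 1)) (by positivity)
  refine ⟨0, S, fun n _ => ?_⟩
  haveI : Finite (V n) := Gs.finite n
  haveI : Fintype (V n) := Fintype.ofFinite (V n)
  obtain ⟨ξ, hξ1, hξ2, hξ3⟩ := hξall n
  set G := Gs.G n with hG
  letI : DecidableRel G.Adj := Classical.decRel _
  have hne : Nonempty (V n) := (Gs.connected n).nonempty
  have hNpos : (0 : ℝ) < (Fintype.card (V n) : ℝ) := by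
    have := Fintype.card_pos (α := V n)
    positivity
  -- per-edge estimate coming from property A
  have hpairsum : ∀ x y : V n, G.Adj x y →
      ∑ z, |(|ξ x z|) - (|ξ y z|)| ≤ ε / ((Gs.degBound : ℝ) + 1) := by
    intro x y hxy
    have h3 := hξ3 x y hxy
    rw [finsum_eq_sum_of_fintype] at h3
    exact le_of_lt
      (lt_of_le_of_lt (Finset.sum_le_sum fun z _ => abs_abs_sub_abs_le_abs_sub _ _) h3)
  -- degree bound
  have hadjcard : ∀ x : V n,
      ((Finset.univ.filter (fun y => G.Adj x y)).card : ℝ) ≤ (Gs.degBound : ℝ) := by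
    intro x
    have h1 := Gs.deg_le n x
    rw [← hG] at h1
    have h2 : (G.neighborSet x).ncard = (Finset.univ.filter (fun y => G.Adj x y)).card := by
      rw [show G.neighborSet x = ↑(Finset.univ.filter (fun y => G.Adj x y)) by
        ext y; simp [SimpleGraph.mem_neighborSet]]
      exact Set.ncard_coe_finset _
    rw [h2] at h1
    exact_mod_cast h1
  -- total mass
  have hsum1 : ∑ z : V n, ∑ x : V n, |ξ x z| = (Fintype.card (V n) : ℝ) := by
    rw [Finset.sum_comm]
    have hone : ∀ x : V n, ∑ z : V n, |ξ x z| = 1 := by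
      intro x
      have := hξ1 x
      rwa [finsum_eq_sum_of_fintype] at this
    rw [Finset.sum_congr rfl (fun x _ => hone x), Finset.sum_const, nsmul_eq_mul, mul_one,
      Finset.card_univ]
  -- the averaged inequality
  have htotal : ∑ z : V n, ∑ x : V n, ∑ y : V n,
      (if G.Adj x y then |(|ξ x z|) - (|ξ y z|)| else 0)
      < ∑ z : V n, ε * ∑ x : V n, |ξ x z| := by
    have hswap : ∑ z : V n, ∑ x : V n, ∑ y : V n,
        (if G.Adj x y then |(|ξ x z|) - (|ξ y z|)| else 0)
        = ∑ x : V n, ∑ y : V n,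
          (if G.Adj x y then (∑ z : V n, |(|ξ x z|) - (|ξ y z|)|) else 0) := by
      rw [Finset.sum_comm]
      refine Finset.sum_congr rfl fun x _ => ?_
      rw [Finset.sum_comm]
      refine Finset.sum_congr rfl fun y _ => ?_
      by_cases hAdj : G.Adj x y <;> simp [hAdj]
    have hεd : 0 ≤ ε / ((Gs.degBound : ℝ) + 1) := by positivity
    have hbound : ∑ x : V n, ∑ y : V n,
        (if G.Adj x y then (∑ z : V n, |(|ξ x z|) - (|ξ y z|)|) else 0)
        ≤ (Fintype.card (V n) : ℝ) * ((Gs.degBound : ℝ) * (ε / ((Gs.degBound : ℝ) + 1))) := by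
      calc ∑ x : V n, ∑ y : V n,
          (if G.Adj x y then (∑ z : V n, |(|ξ x z|) - (|ξ y z|)|) else 0)
          ≤ ∑ x : V n, ∑ y : V n,
            (if G.Adj x y then (ε / ((Gs.degBound : ℝ) + 1)) else 0) := by
            refine Finset.sum_le_sum fun x _ => Finset.sum_le_sum fun y _ => ?_
            by_cases hAdj : G.Adj x y
            · simpa [hAdj] using hpairsum x y hAdj
            · simp [hAdj]
        _ = ∑ x : V n, ((Finset.univ.filter (fun y => G.Adj x y)).card : ℝ)
              * (ε / ((Gs.degBound : ℝ) + 1)) := by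
            refine Finset.sum_congr rfl fun x _ => ?_
            rw [← Finset.sum_filter, Finset.sum_const, nsmul_eq_mul]
        _ ≤ ∑ x : V n, (Gs.degBound : ℝ) * (ε / ((Gs.degBound : ℝ) + 1)) := by
            refine Finset.sum_le_sum fun x _ => ?_
            exact mul_le_mul_of_nonneg_right (hadjcard x) hεd
        _ = (Fintype.card (V n) : ℝ)
              * ((Gs.degBound : ℝ) * (ε / ((Gs.degBound : ℝ) + 1))) := by
            rw [Finset.sum_const, nsmul_eq_mul, Finset.card_univ]
    have hrhs : ∑ z : V n, ε * ∑ x : V n, |ξ x z| = ε * (Fintype.card (V n) : ℝ) := by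
      rw [← Finset.mul_sum, hsum1]
    rw [hswap, hrhs]
    refine lt_of_le_of_lt hbound ?_
    have hkey : (Gs.degBound : ℝ) * (ε / ((Gs.degBound : ℝ) + 1)) < ε := by
      rw [← mul_div_assoc, div_lt_iff₀ hd1]
      nlinarith
    calc (Fintype.card (V n) : ℝ) * ((Gs.degBound : ℝ) * (ε / ((Gs.degBound : ℝ) + 1)))
        < (Fintype.card (V n) : ℝ) * ε := by
          exact mul_lt_mul_of_pos_left hkey hNpos
      _ = ε * (Fintype.card (V n) : ℝ) := mul_comm _ _
  obtain ⟨z, -, hz⟩ := Finset.exists_lt_of_sum_lt htotal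
  obtain ⟨t, ht, hFne, hlt⟩ := coarea G.Adj (fun x => |ξ x z|) (fun x => abs_nonneg _) ε hz
  refine ⟨z, {x | t ≤ |ξ x z|}, hFne, ?_, ?_⟩
  · intro y hy
    have hyt : t ≤ |ξ y z| := hy
    have hne0 : ξ y z ≠ 0 := by
      intro h0
      rw [h0, abs_zero] at hyt
      linarith
    have := hξ2 y z hne0
    simp only [Set.mem_setOf_eq]
    rw [SimpleGraph.dist_comm]
    exact this
  · have himg : edgeBoundary G {x | t ≤ |ξ x z|} ⊆
        (fun p : V n × V n => s(p.1, p.2)) ''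
          {p : V n × V n | G.Adj p.1 p.2 ∧ t ≤ |ξ p.1 z| ∧ |ξ p.2 z| < t} := by
      rintro e ⟨hedge, x, y, rfl, hxF, hyF⟩
      refine ⟨(x, y), ⟨?_, hxF, ?_⟩, rfl⟩
      · exact hedge
      · exact not_le.mp hyF
    have h1 : ((edgeBoundary G {x | t ≤ |ξ x z|}).ncard : ℝ)
        ≤ (({p : V n × V n | G.Adj p.1 p.2 ∧ t ≤ |ξ p.1 z| ∧ |ξ p.2 z| < t}.ncard : ℕ) : ℝ) := by
      have hA1 := Set.ncard_le_ncard himg (Set.toFinite _)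
      have hA2 := Set.ncard_image_le
        (f := fun p : V n × V n => s(p.1, p.2))
        (s := {p : V n × V n | G.Adj p.1 p.2 ∧ t ≤ |ξ p.1 z| ∧ |ξ p.2 z| < t})
        (Set.toFinite _)
      exact_mod_cast le_trans hA1 hA2
    exact lt_of_le_of_lt h1 hlt
end

section
/- Every graph sequence 𝒢 that has property A is hyperfinite. -/
open Filter Topology

/-!
Apply property A with a small `ε`, replace `ξ_x` by `|ξ_x|`, and, for a set `U` of vertices
and a threshold `t ∈ (0, 1)` and a vertex `z`, look at the level set `{x ∈ U | t < |ξ_x(z)|}`.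
These sets lie in balls of radius `S`, so they are uniformly small. Integrating over `t` and
summing over `z`, the total size of the level sets is `|U|` while the total number of edges
leaving them inside `U` is at most `ε · d · |U|` (coarea formula), so some level set `F` has
relative boundary at most `ε (d + 1) |F|`. Removing such sets `F` greedily cuts at most
`ε (d + 1) |V|` edges and leaves components of size at most `(d + 1) ^ S`.
-/

section PropertyAHyperfinite

open MeasureTheory Finset

theorem setIntegral_Ioo_zero_one_indicator_Iio {a : ℝ} (ha : a ∈ Set.Icc 0 1) :
    ∫ t in Set.Ioo (0 : ℝ) 1, (Set.Iio a).indicator 1 t = a := by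
  rw [integral_indicator_one measurableSet_Iio, measureReal_restrict_apply measurableSet_Iio,
    Set.Iio_inter_Ioo, min_eq_left ha.2, Real.volume_real_Ioo, sub_zero, max_eq_left ha.1]

theorem setIntegral_indicator_Ico_le_abs (s : Set ℝ) (a b : ℝ) :
    ∫ t in s, (Set.Ico b a).indicator 1 t ≤ |a - b| := by
  rw [integral_indicator_one measurableSet_Ico, measureReal_restrict_apply measurableSet_Ico]
  calc volume.real (Set.Ico b a ∩ s) ≤ volume.real (Set.Ico b a) :=
        measureReal_mono Set.inter_subset_left (by simp)
    _ = max (a - b) 0 := Real.volume_real_Ico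
    _ ≤ |a - b| := max_le (le_abs_self _) (abs_nonneg _)

theorem exists_threshold_card_lt {ι κ Z : Type*} [Fintype Z] (s : Finset ι) (P : Finset κ)
    (a : Z → ι → ℝ) (u v : Z → κ → ℝ) (c : ℝ) (ha : ∀ z, ∀ i ∈ s, a z i ∈ Set.Icc 0 1)
    (h : ∑ z, ∑ p ∈ P, |u z p - v z p| < c * ∑ z, ∑ i ∈ s, a z i) :
    ∃ t ∈ Set.Ioo (0 : ℝ) 1, ∃ z,
      (#{p ∈ P | v z p ≤ t ∧ t < u z p} : ℝ) < c * #{i ∈ s | t < a z i} := by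
  classical
  by_contra! H
  have hint (A : Set ℝ) (hA : MeasurableSet A) :
      IntegrableOn (A.indicator 1) (Set.Ioo (0 : ℝ) 1) :=
    (integrable_const (1 : ℝ)).indicator hA
  have hpoint : ∀ t ∈ Set.Ioo (0 : ℝ) 1,
      c * ∑ z, ∑ i ∈ s, (Set.Iio (a z i)).indicator 1 t ≤
        ∑ z, ∑ p ∈ P, (Set.Ico (v z p) (u z p)).indicator 1 t := by
    intro t ht
    rw [mul_sum]
    refine sum_le_sum fun z _ => ?_
    have hz := H t ht z
    rw [natCast_card_filter, natCast_card_filter] at hz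
    simpa only [Set.indicator_apply, Set.mem_Iio, Set.mem_Ico, Pi.one_apply] using hz
  have hlevel : ∫ t in Set.Ioo (0 : ℝ) 1, ∑ z, ∑ i ∈ s, (Set.Iio (a z i)).indicator 1 t =
      ∑ z, ∑ i ∈ s, a z i := by
    rw [integral_finsetSum _ fun z _ => integrable_finsetSum _ fun i _ => hint _ measurableSet_Iio]
    refine sum_congr rfl fun z _ => ?_
    rw [integral_finsetSum _ fun i _ => hint _ measurableSet_Iio]
    exact sum_congr rfl fun i hi => setIntegral_Ioo_zero_one_indicator_Iio (ha z i hi)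
  have hcoarea : ∫ t in Set.Ioo (0 : ℝ) 1, ∑ z, ∑ p ∈ P, (Set.Ico (v z p) (u z p)).indicator 1 t ≤
      ∑ z, ∑ p ∈ P, |u z p - v z p| := by
    rw [integral_finsetSum _ fun z _ => integrable_finsetSum _ fun p _ => hint _ measurableSet_Ico]
    refine sum_le_sum fun z _ => ?_
    rw [integral_finsetSum _ fun p _ => hint _ measurableSet_Ico]
    exact sum_le_sum fun p _ => setIntegral_indicator_Ico_le_abs _ _ _
  have hmono := setIntegral_mono_on
    ((integrable_finsetSum _ fun z _ => integrable_finsetSum _ fun i _ =>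
      hint _ measurableSet_Iio).const_mul c)
    (integrable_finsetSum _ fun z _ => integrable_finsetSum _ fun p _ => hint _ measurableSet_Ico)
    measurableSet_Ioo hpoint
  rw [integral_const_mul, hlevel] at hmono
  linarith

variable {V : Type*} (G : SimpleGraph V)

def edgeBoundaryWithin (U F : Set V) : Set (Sym2 V) :=
  {e | e ∈ G.edgeSet ∧ ∃ x y, e = s(x, y) ∧ x ∈ F ∧ y ∈ U \ F}

theorem mem_of_reachable_of_adj_closed {C : Set (Sym2 V)} {P : Set V}
    (hP : ∀ y ∈ P, ∀ w, G.Adj y w → s(y, w) ∉ C → w ∈ P) {x y : V} (hx : x ∈ P)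
    (hxy : (G.deleteEdges C).Reachable x y) : y ∈ P := by
  obtain ⟨p⟩ := hxy
  induction p with
  | nil => exact hx
  | cons hadj _ ih =>
    rw [SimpleGraph.deleteEdges_adj] at hadj
    exact ih (hP _ hx _ hadj.1 hadj.2)

theorem exists_edgeCut_adj_closed_pieces [Finite V] (M : ℕ) (c : ℝ)
    (hF : ∀ U : Set V, U.Nonempty → ∃ F ⊆ U, F.Nonempty ∧ F.ncard ≤ M ∧
      ((edgeBoundaryWithin G U F).ncard : ℝ) ≤ c * F.ncard) (U : Set V) :
    ∃ C ⊆ G.edgeSet, (C.ncard : ℝ) ≤ c * U.ncard ∧ ∀ x ∈ U, ∃ P ⊆ U, x ∈ P ∧ P.ncard ≤ M ∧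
      ∀ y ∈ P, ∀ w ∈ U, G.Adj y w → s(y, w) ∉ C → w ∈ P := by
  induction U using WellFoundedLT.induction with
  | _ U ih =>
    rcases U.eq_empty_or_nonempty with rfl | hU
    · exact ⟨∅, Set.empty_subset _, by simp, by simp⟩
    obtain ⟨F, hFU, hFne, hFM, hFbd⟩ := hF U hU
    obtain ⟨C, hCG, hCcard, hC⟩ :=
      ih (U \ F) (Set.sdiff_ssubset_left_iff.mpr (by rwa [Set.inter_eq_right.mpr hFU]))
    refine ⟨edgeBoundaryWithin G U F ∪ C, Set.union_subset (fun e he => he.1) hCG, ?_, ?_⟩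
    · have hsplit : (U.ncard : ℝ) = F.ncard + (U \ F).ncard := by
        rw [← Set.ncard_sdiff_add_ncard_of_subset hFU U.toFinite]; push_cast; ring
      calc ((edgeBoundaryWithin G U F ∪ C).ncard : ℝ)
          ≤ (edgeBoundaryWithin G U F).ncard + C.ncard := by exact_mod_cast Set.ncard_union_le _ _
        _ ≤ c * F.ncard + c * (U \ F).ncard := add_le_add hFbd hCcard
        _ = c * U.ncard := by rw [hsplit]; ring
    · intro x hx
      by_cases hxF : x ∈ F
      · refine ⟨F, hFU, hxF, hFM, fun y hy w hw hyw hcut => ?_⟩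
        by_contra hwF
        exact hcut (Or.inl ⟨hyw, y, w, rfl, hy, hw, hwF⟩)
      · obtain ⟨P, hPU, hxP, hPM, hP⟩ := hC x ⟨hx, hxF⟩
        refine ⟨P, hPU.trans Set.sdiff_subset, hxP, hPM, fun y hy w hw hyw hcut => ?_⟩
        have hwF : w ∉ F := fun hwF =>
          hcut (Or.inl ⟨hyw, w, y, Sym2.eq_swap, hwF, hPU hy⟩)
        exact hP y hy w ⟨hw, hwF⟩ hyw fun h => hcut (Or.inr h)

theorem exists_edgeCut_reachable_ncard_le [Finite V] (M : ℕ) (c : ℝ)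
    (hF : ∀ U : Set V, U.Nonempty → ∃ F ⊆ U, F.Nonempty ∧ F.ncard ≤ M ∧
      ((edgeBoundaryWithin G U F).ncard : ℝ) ≤ c * F.ncard) :
    ∃ C ⊆ G.edgeSet, (C.ncard : ℝ) ≤ c * Nat.card V ∧
      ∀ x, {y | (G.deleteEdges C).Reachable x y}.ncard ≤ M := by
  obtain ⟨C, hCG, hCcard, hC⟩ := exists_edgeCut_adj_closed_pieces G M c hF Set.univ
  refine ⟨C, hCG, by rwa [Set.ncard_univ] at hCcard, fun x => ?_⟩
  obtain ⟨P, -, hxP, hPM, hP⟩ := hC x (Set.mem_univ x)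
  exact (Set.ncard_le_ncard (fun y hy => mem_of_reachable_of_adj_closed G
    (fun y hy w => hP y hy w (Set.mem_univ w)) hxP hy)).trans hPM

theorem card_dist_le_le_pow [Fintype V] [DecidableRel G.Adj] (hG : G.Preconnected) {d : ℕ}
    (hdeg : ∀ x, #(G.neighborFinset x) ≤ d) (z : V) (S : ℕ) :
    #{x | G.dist z x ≤ S} ≤ (d + 1) ^ S := by
  classical
  induction S generalizing z with
  | zero =>
    refine (card_le_card fun x hx => ?_).trans (card_singleton z).le
    simp only [mem_filter, mem_univ, true_and, Nat.le_zero] at hx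
    exact mem_singleton.mpr (((hG z x).dist_eq_zero_iff.mp hx).symm)
  | succ S ih =>
    have hsub : ({x | G.dist z x ≤ S + 1} : Finset V) ⊆
        insert z ((G.neighborFinset z).biUnion fun y => {x | G.dist y x ≤ S}) := by
      intro x hx
      obtain ⟨p, hp⟩ := (hG z x).exists_walk_length_eq_dist
      cases p with
      | nil => exact mem_insert_self _ _
      | cons hadj q =>
        refine mem_insert_of_mem (mem_biUnion.mpr ⟨_, (G.mem_neighborFinset _ _).mpr hadj, ?_⟩)
        simp only [mem_filter, mem_univ, true_and, SimpleGraph.Walk.length_cons] at hx hp ⊢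
        exact (G.dist_le q).trans (by omega)
    calc #{x | G.dist z x ≤ S + 1}
        ≤ #((G.neighborFinset z).biUnion fun y => {x | G.dist y x ≤ S}) + 1 :=
          (card_le_card hsub).trans (card_insert_le _ _)
      _ ≤ d * (d + 1) ^ S + 1 := by
          grw [card_biUnion_le, sum_le_sum fun y _ => ih y, sum_const, smul_eq_mul, hdeg z]
      _ ≤ (d + 1) ^ (S + 1) := by
          rw [pow_succ]; nlinarith [Nat.one_le_pow S (d + 1) (Nat.succ_pos d)]

theorem card_filter_adj_product_le [Fintype V] [DecidableRel G.Adj] {d : ℕ}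
    (hdeg : ∀ x, #(G.neighborFinset x) ≤ d) (s : Finset V) :
    #{p ∈ s ×ˢ s | G.Adj p.1 p.2} ≤ d * #s := by
  classical
  refine card_le_mul_card_image_of_maps_to (f := Prod.fst)
    (fun p hp => (mem_product.mp (mem_filter.mp hp).1).1) d fun x _ => ?_
  calc #{p ∈ {p ∈ s ×ˢ s | G.Adj p.1 p.2} | p.1 = x} ≤ #(G.neighborFinset x) :=
        card_le_card_of_injOn Prod.snd (fun p hp => by
          simp only [coe_filter, mem_filter, Set.mem_ofPred_eq] at hp
          simpa [hp.2] using hp.1.2) fun p hp q hq hpq => by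
          simp only [coe_filter, Set.mem_ofPred_eq] at hp hq
          exact Prod.ext (hp.2.trans hq.2.symm) hpq
    _ ≤ d := hdeg x

theorem ncard_edgeBoundaryWithin_levelSet_le [DecidableRel G.Adj] (s : Finset V) (f : V → ℝ)
    (t : ℝ) : (edgeBoundaryWithin G s ({x ∈ s | t < f x} : Finset V)).ncard ≤
      #{p ∈ {p ∈ s ×ˢ s | G.Adj p.1 p.2} | f p.2 ≤ t ∧ t < f p.1} := by
  classical
  refine (Set.ncard_le_ncard (t := ({p ∈ {p ∈ s ×ˢ s | G.Adj p.1 p.2} | f p.2 ≤ t ∧ t < f p.1}.image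
    fun p => s(p.1, p.2) : Finset (Sym2 V))) ?_).trans ?_
  · rintro e ⟨he, x, y, rfl, hx, hy, hyF⟩
    simp only [coe_filter, Set.mem_ofPred_eq] at hx hyF
    simp only [coe_image, coe_filter, Set.mem_image, Set.mem_ofPred_eq]
    exact ⟨(x, y), ⟨mem_filter.mpr ⟨mem_product.mpr ⟨hx.1, hy⟩, he⟩,
      not_lt.mp fun h => hyF ⟨hy, h⟩, hx.2⟩, rfl⟩
  · rw [Set.ncard_coe_finset]
    exact card_image_le

theorem exists_small_set_small_edgeBoundaryWithin [Fintype V] [DecidableRel G.Adj] {d M : ℕ}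
    {ε : ℝ} (hε : 0 < ε) (hdeg : ∀ x, #(G.neighborFinset x) ≤ d) (h : V → V → ℝ)
    (hpos : ∀ x z, 0 ≤ h x z) (hsum : ∀ x, ∑ z, h x z = 1)
    (hgrad : ∀ x y, G.Adj x y → ∑ z, |h x z - h y z| ≤ ε)
    (hsupp : ∀ z, {x | h x z ≠ 0}.ncard ≤ M) (U : Set V) (hU : U.Nonempty) :
    ∃ F ⊆ U, F.Nonempty ∧ F.ncard ≤ M ∧
      ((edgeBoundaryWithin G U F).ncard : ℝ) ≤ ε * (d + 1) * F.ncard := by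
  obtain ⟨s, rfl⟩ := U.toFinite.exists_finset_coe
  set A : Finset (V × V) := {p ∈ s ×ˢ s | G.Adj p.1 p.2}
  have hs : (0 : ℝ) < #s := by exact_mod_cast card_pos.mpr (coe_nonempty.mp hU)
  have hunit : ∀ z, ∀ x ∈ s, h x z ∈ Set.Icc 0 1 := fun z x _ =>
    ⟨hpos x z, hsum x ▸ single_le_sum (fun y _ => hpos x y) (mem_univ z)⟩
  have hmass : ∑ z, ∑ p ∈ A, |h p.1 z - h p.2 z| < ε * (d + 1) * ∑ z, ∑ x ∈ s, h x z := by
    calc ∑ z, ∑ p ∈ A, |h p.1 z - h p.2 z| = ∑ p ∈ A, ∑ z, |h p.1 z - h p.2 z| := sum_comm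
      _ ≤ ∑ p ∈ A, ε := sum_le_sum fun p hp => hgrad _ _ (mem_filter.mp hp).2
      _ ≤ ε * d * #s := by
        rw [sum_const, nsmul_eq_mul, mul_comm, mul_assoc]
        gcongr
        exact_mod_cast card_filter_adj_product_le G hdeg s
      _ < ε * (d + 1) * #s := by gcongr; linarith
      _ = ε * (d + 1) * ∑ z, ∑ x ∈ s, h x z := by
        rw [sum_comm, sum_congr rfl fun x _ => hsum x, sum_const, nsmul_one]
  obtain ⟨t, ht, z, hlt⟩ := exists_threshold_card_lt s A (fun z x => h x z)
    (fun z p => h p.1 z) (fun z p => h p.2 z) _ hunit hmass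
  refine ⟨({x ∈ s | t < h x z} : Finset V), coe_subset.mpr (filter_subset _ s), ?_, ?_, ?_⟩
  · by_contra hF
    rw [Set.not_nonempty_iff_eq_empty, coe_eq_empty] at hF
    rw [hF, card_empty, Nat.cast_zero, mul_zero] at hlt
    exact (Nat.cast_nonneg _).not_gt hlt
  · refine (Set.ncard_le_ncard fun x hx => ?_).trans (hsupp z)
    exact (ht.1.trans (mem_filter.mp hx).2).ne'
  · rw [Set.ncard_coe_finset]
    exact (Nat.cast_le.mpr (ncard_edgeBoundaryWithin_levelSet_le G s (h · z) t)).trans hlt.le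

theorem exists_edgeCut_of_propertyA_witness [Finite V] (hG : G.Connected) {d S : ℕ}
    (hdeg : ∀ x, (G.neighborSet x).ncard ≤ d) {ε : ℝ} (hε : 0 < ε) (ξ : V → V → ℝ)
    (hξ1 : ∀ x, ∑ᶠ z, |ξ x z| = 1) (hξS : ∀ x z, ξ x z ≠ 0 → G.dist x z ≤ S)
    (hξε : ∀ x y, G.Adj x y → ∑ᶠ z, |ξ x z - ξ y z| < ε) :
    ∃ C ⊆ G.edgeSet, (C.ncard : ℝ) ≤ ε * (d + 1) * Nat.card V ∧
      ∀ x, {y | (G.deleteEdges C).Reachable x y}.ncard ≤ (d + 1) ^ S := by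
  classical
  have := Fintype.ofFinite V
  have hdeg' : ∀ x, #(G.neighborFinset x) ≤ d := fun x => by
    rw [G.neighborFinset_def, ← Set.ncard_eq_toFinset_card']; exact hdeg x
  refine exists_edgeCut_reachable_ncard_le G _ _ fun U hU =>
    exists_small_set_small_edgeBoundaryWithin G hε hdeg' (fun x z => |ξ x z|)
      (fun _ _ => abs_nonneg _) (fun x => ?_) (fun x y hxy => ?_) (fun z => ?_) U hU
  · rw [← finsum_eq_sum_of_fintype]; exact hξ1 x
  · refine (sum_le_sum fun z _ => abs_abs_sub_abs_le_abs_sub _ _).trans ?_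
    rw [← finsum_eq_sum_of_fintype]; exact (hξε x y hxy).le
  · calc {x | |ξ x z| ≠ 0}.ncard ≤ (↑({x | G.dist z x ≤ S} : Finset V) : Set V).ncard :=
          Set.ncard_le_ncard fun x hx => by
            simpa [G.dist_comm] using hξS x z (abs_ne_zero.mp hx)
      _ ≤ (d + 1) ^ S := by
          rw [Set.ncard_coe_finset]; exact card_dist_le_le_pow G hG.preconnected hdeg' z S

end PropertyAHyperfinite

/-- Every graph sequence with property A is hyperfinite. -/
theorem stmt10 {V : ℕ → Type} (Gs : GraphSeq V) (hA : Gs.propertyA) :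
    Gs.hyperfinite := by
  intro ε hε
  set d := Gs.degBound
  obtain ⟨S, -, hξ⟩ := hA (ε / (2 * (d + 1))) (by positivity)
  choose ξ hξ1 hξS hξε using hξ
  choose E hEG hEcard hEK using fun n =>
    haveI := Gs.finite n
    exists_edgeCut_of_propertyA_witness (Gs.G n) (Gs.connected n) (Gs.deg_le n)
      (by positivity) (ξ n) (hξ1 n) (hξS n) (hξε n)
  refine ⟨(d + 1) ^ S, by positivity, E, hEG, ?_, hEK⟩
  have hbound : ∀ n, ((E n).ncard : ℝ) / Nat.card (V n) ≤ ε / 2 := fun n => by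
    have := Gs.finite n
    have := (Gs.connected n).nonempty
    rw [div_le_iff₀ (by exact_mod_cast Nat.card_pos)]
    refine (hEcard n).trans_eq ?_
    field_simp
    ring
  calc limsup (fun n => ((E n).ncard : ℝ) / Nat.card (V n)) atTop ≤ ε / 2 :=
        limsup_le_of_le (isCoboundedUnder_le_of_le atTop fun n => by positivity)
          (Eventually.of_forall hbound)
    _ < ε := half_lt_self hε
end
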